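/- arXiv:2312.09998 — 4 statements merged into one kernel-verified Lean document; each statement's English description precedes it below -/
import Mathlib

section
/- Let Ψ be a Poisson bivector on ℝ^n with components Ψ^{αβ}(y) satisfying the Jacobi identity, and let 𝒜 = 𝒜_i(q,y) dq^i be a smooth gauge 1-form on ℝ^m_q × ℝ^n_y. Define ℱ_{ij} := ∂𝒜_j/∂q^i − ∂𝒜_i/∂q^j + Ψ^{αβ} (∂𝒜_i/∂y^α)(∂𝒜_j/∂y^β). Then the bracket on functions of (p,q,y) ∈ ℝ^m × ℝ^m × ℝ^n determined by the relations {p_i,p_j} = ℱ_{ij}, {p_i,q^j} = δ_i^j, {q^i,q^j} = 0, {p_i,y^α} = −Ψ^{αβ} ∂𝒜_i/∂y^β, {q^i,y^α} = 0, {y^α,y^β} = Ψ^{αβ} satisfies the Jacobi identity, i.e., defines a Poisson bracket. -/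
open scoped BigOperators Topology

noncomputable section

abbrev Vec (k : ℕ) : Type := Fin k → ℝ
abbrev ETot (m n : ℕ) : Type := Vec m × Vec m × Vec n

/-- Partial derivative of a function on `ℝⁿ` in the `β`-th coordinate direction. -/
def pdY (n : ℕ) (f : Vec n → ℝ) (β : Fin n) (y : Vec n) : ℝ :=
  fderiv ℝ f y (Pi.single β 1)

/-- Fiberwise Poisson bracket `{f,g}_N = Ψ^{αβ} ∂f/∂y^α ∂g/∂y^β`. -/
def fibBracket (n : ℕ) (Ψ : Vec n → Fin n → Fin n → ℝ)
    (f g : Vec n → ℝ) (y : Vec n) : ℝ :=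
  ∑ α, ∑ β, Ψ y α β * pdY n f α y * pdY n g β y

/-- `∂𝒜_i/∂q^j`. -/
def dqA (m n : ℕ) (A : Vec m → Vec n → Fin m → ℝ)
    (j i : Fin m) (q : Vec m) (y : Vec n) : ℝ :=
  fderiv ℝ (fun q' => A q' y i) q (Pi.single j 1)

/-- `∂𝒜_i/∂y^α`. -/
def dyA (m n : ℕ) (A : Vec m → Vec n → Fin m → ℝ)
    (α : Fin n) (i : Fin m) (q : Vec m) (y : Vec n) : ℝ :=
  fderiv ℝ (fun y' => A q y' i) y (Pi.single α 1)

/-- Curvature 2-form coefficients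
`ℱ_{ij} = ∂𝒜_j/∂q^i − ∂𝒜_i/∂q^j + Ψ^{αβ} ∂𝒜_i/∂y^α ∂𝒜_j/∂y^β`. -/
def curvF (m n : ℕ) (Ψ : Vec n → Fin n → Fin n → ℝ)
    (A : Vec m → Vec n → Fin m → ℝ) (i j : Fin m) (q : Vec m) (y : Vec n) : ℝ :=
  dqA m n A i j q y - dqA m n A j i q y
    + ∑ α, ∑ β, Ψ y α β * dyA m n A α i q y * dyA m n A β j q y

/-- Partial derivatives on `E = ℝ^m_p × ℝ^m_q × ℝ^n_y`. -/
def dP (m n : ℕ) (f : ETot m n → ℝ) (i : Fin m) (x : ETot m n) : ℝ :=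
  fderiv ℝ f x (Pi.single i 1, 0, 0)

def dQ (m n : ℕ) (f : ETot m n → ℝ) (i : Fin m) (x : ETot m n) : ℝ :=
  fderiv ℝ f x (0, Pi.single i 1, 0)

def dYE (m n : ℕ) (f : ETot m n → ℝ) (α : Fin n) (x : ETot m n) : ℝ :=
  fderiv ℝ f x (0, 0, Pi.single α 1)

/-- The gauge Poisson bracket `Π_𝒜` on `E = ℝ^m_p × ℝ^m_q × ℝ^n_y`, determined by the
pairwise relations `{p_i,p_j} = ℱ_{ij}`, `{p_i,q^j} = δ_i^j`, `{q^i,q^j} = 0`,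
`{p_i,y^α} = −Ψ^{αβ} ∂𝒜_i/∂y^β`, `{q^i,y^α} = 0`, `{y^α,y^β} = Ψ^{αβ}`. -/
def gaugeBracket (m n : ℕ) (Ψ : Vec n → Fin n → Fin n → ℝ)
    (A : Vec m → Vec n → Fin m → ℝ) (f g : ETot m n → ℝ) (x : ETot m n) : ℝ :=
  (∑ i, ∑ j, curvF m n Ψ A i j x.2.1 x.2.2 * dP m n f i x * dP m n g j x)
  + (∑ i, (dP m n f i x * dQ m n g i x - dQ m n f i x * dP m n g i x))
  + (∑ i, ∑ α, (-(∑ β, Ψ x.2.2 α β * dyA m n A β i x.2.1 x.2.2))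
       * (dP m n f i x * dYE m n g α x - dYE m n f α x * dP m n g i x))
  + (∑ α, ∑ β, Ψ x.2.2 α β * dYE m n f α x * dYE m n g β x)

variable {E : Type*} [NormedAddCommGroup E] [NormedSpace ℝ E] {ι : Type*} [Fintype ι]

def Dd (v : E) (f : E → ℝ) (x : E) : ℝ := fderiv ℝ f x v

lemma Dd_mul (v : E) {f g : E → ℝ} {x : E} (hf : DifferentiableAt ℝ f x)
    (hg : DifferentiableAt ℝ g x) :
    Dd v (fun y => f y * g y) x = f x * Dd v g x + g x * Dd v f x := by
  simp [Dd, fderiv_fun_mul hf hg]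

lemma Dd_sum (v : E) {κ : Type*} (s : Finset κ) {f : κ → E → ℝ} {x : E}
    (hf : ∀ i ∈ s, DifferentiableAt ℝ (f i) x) :
    Dd v (fun y => ∑ i ∈ s, f i y) x = ∑ i ∈ s, Dd v (f i) x := by
  simp [Dd, fderiv_fun_sum hf]

lemma contDiff_Dd (v : E) {f : E → ℝ} (hf : ContDiff ℝ (⊤ : ℕ∞) f) : ContDiff ℝ (⊤ : ℕ∞) (Dd v f) :=
  (hf.fderiv_right (by simp)).clm_apply contDiff_const

lemma Dd_comm (u v : E) {f : E → ℝ} (hf : ContDiff ℝ (⊤ : ℕ∞) f) (x : E) :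
    Dd u (Dd v f) x = Dd v (Dd u f) x := by
  have hd : Differentiable ℝ (fderiv ℝ f) := (hf.fderiv_right (m := (⊤ : ℕ∞)) (by simp)).differentiable (by simp)
  have hs := (hf.contDiffAt (x := x)).isSymmSndFDerivAt (by rw [minSmoothness_of_isRCLikeNormedField]; exact WithTop.coe_le_coe.mpr (le_top : (2 : ℕ∞) ≤ ⊤))
  have e2 : ∀ u v : E, Dd u (Dd v f) x = fderiv ℝ (fderiv ℝ f) x u v := by
    intro u v
    show fderiv ℝ (fun y => (fderiv ℝ f y) v) x u = _
    rw [fderiv_clm_apply (hd x) (differentiableAt_const v)]; simp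
  rw [e2, e2, hs]

lemma nest3 (F : ι → ι → ι → ℝ) :
    ∑ a, ∑ b, ∑ c, F a b c = ∑ p : ι × ι × ι, F p.1 p.2.1 p.2.2 := by
  simp [Fintype.sum_prod_type]

lemma nest4 (F : ι → ι → ι → ι → ℝ) :
    ∑ a, ∑ b, ∑ c, ∑ d, F a b c d = ∑ p : ι × ι × ι × ι, F p.1 p.2.1 p.2.2.1 p.2.2.2 := by
  simp [Fintype.sum_prod_type]

def rev4 : (ι × ι × ι × ι) ≃ (ι × ι × ι × ι) where
  toFun p := (p.2.2.2, p.2.2.1, p.2.1, p.1)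
  invFun p := (p.2.2.2, p.2.2.1, p.2.1, p.1)
  left_inv _ := rfl
  right_inv _ := rfl

def bl4 : (ι × ι × ι × ι) ≃ (ι × ι × ι × ι) where
  toFun p := (p.1, p.2.2.2, p.2.1, p.2.2.1)
  invFun p := (p.1, p.2.2.1, p.2.2.2, p.2.1)
  left_inv _ := rfl
  right_inv _ := rfl

def cyc3 : (ι × ι × ι) ≃ (ι × ι × ι) where
  toFun p := (p.2.1, p.2.2, p.1)
  invFun p := (p.2.2, p.1, p.2.1)
  left_inv _ := rfl
  right_inv _ := rfl

lemma sum4_rev (F : ι → ι → ι → ι → ℝ) :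
    ∑ a, ∑ b, ∑ c, ∑ d, F a b c d = ∑ a, ∑ b, ∑ c, ∑ d, F d c b a := by
  rw [nest4, nest4]
  exact (Equiv.sum_comp (rev4 (ι := ι)) (fun p => F p.1 p.2.1 p.2.2.1 p.2.2.2)).symm

lemma sum4_bl (F : ι → ι → ι → ι → ℝ) :
    ∑ a, ∑ b, ∑ c, ∑ d, F a b c d = ∑ a, ∑ b, ∑ c, ∑ d, F a d b c := by
  rw [nest4, nest4]
  exact (Equiv.sum_comp (bl4 (ι := ι)) (fun p => F p.1 p.2.1 p.2.2.1 p.2.2.2)).symm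

lemma sum3_cyc (F : ι → ι → ι → ℝ) :
    ∑ a, ∑ b, ∑ c, F a b c = ∑ a, ∑ b, ∑ c, F b c a := by
  rw [nest3, nest3]
  exact (Equiv.sum_comp (cyc3 (ι := ι)) (fun p => F p.1 p.2.1 p.2.2)).symm

lemma sum3_cyc' (F : ι → ι → ι → ℝ) :
    ∑ a, ∑ b, ∑ c, F a b c = ∑ a, ∑ b, ∑ c, F c a b := by
  rw [nest3, nest3]
  exact (Equiv.sum_comp (cyc3 (ι := ι)).symm (fun p => F p.1 p.2.1 p.2.2)).symm

/-- general bracket attached to a bivector `P` in the frame `e` -/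
def Br (e : ι → E) (P : ι → ι → E → ℝ) (f g : E → ℝ) (x : E) : ℝ :=
  ∑ a, ∑ b, P a b x * Dd (e a) f x * Dd (e b) g x

def Xq (e : ι → E) (P : ι → ι → E → ℝ) (f g h : E → ℝ) (x : E) : ℝ :=
  ∑ a, ∑ b, ∑ c, ∑ d, P a b x * P c d x * Dd (e a) f x * Dd (e b) (Dd (e c) g) x * Dd (e d) h x

def Yq (e : ι → E) (P : ι → ι → E → ℝ) (f g h : E → ℝ) (x : E) : ℝ :=
  ∑ a, ∑ b, ∑ c, ∑ d, P a b x * Dd (e a) f x * Dd (e b) (P c d) x * Dd (e c) g x * Dd (e d) h x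

theorem generic_jacobi (e : ι → E) (P : ι → ι → E → ℝ)
    (hP : ∀ a b, ContDiff ℝ (⊤ : ℕ∞) (P a b))
    (hskew : ∀ a b y, P a b y = -P b a y)
    (hjac : ∀ (y : E) (a c d : ι),
      ∑ b, (P a b y * Dd (e b) (P c d) y + P c b y * Dd (e b) (P d a) y
        + P d b y * Dd (e b) (P a c) y) = 0)
    (f g h : E → ℝ) (hf : ContDiff ℝ (⊤ : ℕ∞) f) (hg : ContDiff ℝ (⊤ : ℕ∞) g) (hh : ContDiff ℝ (⊤ : ℕ∞) h)
    (x : E) :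
    Br e P f (Br e P g h) x + Br e P g (Br e P h f) x + Br e P h (Br e P f g) x = 0 := by
  classical
  have hdiff : ∀ {F : E → ℝ}, ContDiff ℝ (⊤ : ℕ∞) F → ∀ y, DifferentiableAt ℝ F y :=
    fun hF y => (hF.differentiable (by simp)).differentiableAt
  -- key expansion
  have key : ∀ (u v w : E → ℝ), ContDiff ℝ (⊤ : ℕ∞) u → ContDiff ℝ (⊤ : ℕ∞) v → ContDiff ℝ (⊤ : ℕ∞) w →
      Br e P u (Br e P v w) x = Yq e P u v w x + Xq e P u v w x - Xq e P u w v x := by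
    intro u v w hu hv hw
    have hin : ∀ b, Dd (e b) (Br e P v w) x
        = ∑ c, ∑ d, (Dd (e b) (P c d) x * Dd (e c) v x * Dd (e d) w x
          + P c d x * Dd (e b) (Dd (e c) v) x * Dd (e d) w x
          + P c d x * Dd (e c) v x * Dd (e b) (Dd (e d) w) x) := by
      intro b
      have h1 : Br e P v w = fun y => ∑ c, ∑ d, P c d y * Dd (e c) v y * Dd (e d) w y := rfl
      rw [h1, Dd_sum _ _ (fun c _ => hdiff (ContDiff.sum fun d _ =>
          ((hP c d).mul (contDiff_Dd _ hv)).mul (contDiff_Dd _ hw)) x)]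
      apply Finset.sum_congr rfl; intro c _
      rw [Dd_sum _ _ (fun d _ =>
        hdiff (((hP c d).mul (contDiff_Dd _ hv)).mul (contDiff_Dd _ hw)) x)]
      apply Finset.sum_congr rfl; intro d _
      rw [Dd_mul _ (hdiff ((hP c d).mul (contDiff_Dd _ hv)) x) (hdiff (contDiff_Dd _ hw) x),
          Dd_mul _ (hdiff (hP c d) x) (hdiff (contDiff_Dd _ hv) x)]
      ring
    have h0 : Br e P u (Br e P v w) x
        = ∑ a, ∑ b, P a b x * Dd (e a) u x * Dd (e b) (Br e P v w) x := rfl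
    rw [h0]
    calc ∑ a, ∑ b, P a b x * Dd (e a) u x * Dd (e b) (Br e P v w) x
        = ∑ a, ∑ b, ∑ c, ∑ d,
            (P a b x * Dd (e a) u x * Dd (e b) (P c d) x * Dd (e c) v x * Dd (e d) w x
          + P a b x * P c d x * Dd (e a) u x * Dd (e b) (Dd (e c) v) x * Dd (e d) w x
          + P a b x * P c d x * Dd (e a) u x * Dd (e c) v x * Dd (e b) (Dd (e d) w) x) := by
          apply Finset.sum_congr rfl; intro a _
          apply Finset.sum_congr rfl; intro b _
          rw [hin b, Finset.mul_sum]
          apply Finset.sum_congr rfl; intro c _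
          rw [Finset.mul_sum]
          apply Finset.sum_congr rfl; intro d _
          ring
      _ = Yq e P u v w x + Xq e P u v w x
          + ∑ a, ∑ b, ∑ c, ∑ d, P a b x * P c d x * Dd (e a) u x * Dd (e c) v x
              * Dd (e b) (Dd (e d) w) x := by
          simp only [Finset.sum_add_distrib]; rfl
      _ = Yq e P u v w x + Xq e P u v w x - Xq e P u w v x := by
          have h3 : ∑ a, ∑ b, ∑ c, ∑ d, P a b x * P c d x * Dd (e a) u x * Dd (e c) v x
              * Dd (e b) (Dd (e d) w) x = - Xq e P u w v x := by
            unfold Xq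
            rw [← Finset.sum_neg_distrib]
            apply Finset.sum_congr rfl; intro a _
            rw [← Finset.sum_neg_distrib]
            apply Finset.sum_congr rfl; intro b _
            rw [Finset.sum_comm, ← Finset.sum_neg_distrib]
            apply Finset.sum_congr rfl; intro c _
            rw [← Finset.sum_neg_distrib]
            apply Finset.sum_congr rfl; intro d _
            rw [hskew c d]
            ring
          rw [h3]; ring
  -- symmetry of Xq
  have hX : ∀ (u v w : E → ℝ), ContDiff ℝ (⊤ : ℕ∞) v →
      Xq e P u v w x = Xq e P w v u x := by
    intro u v w hv
    unfold Xq
    rw [sum4_rev]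
    apply Finset.sum_congr rfl; intro a _
    apply Finset.sum_congr rfl; intro b _
    apply Finset.sum_congr rfl; intro c _
    apply Finset.sum_congr rfl; intro d _
    rw [hskew d c, hskew b a, Dd_comm (e c) (e b) hv x]
    ring
  -- cyclic sum of Yq vanishes
  have hYcan : ∀ (u v w : E → ℝ), Yq e P u v w x
      = ∑ a, ∑ b, ∑ c, (Dd (e a) u x * Dd (e b) v x * Dd (e c) w x
          * ∑ d, P a d x * Dd (e d) (P b c) x) := by
    intro u v w
    unfold Yq
    rw [sum4_bl]
    apply Finset.sum_congr rfl; intro a _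
    apply Finset.sum_congr rfl; intro b _
    apply Finset.sum_congr rfl; intro c _
    rw [Finset.mul_sum]
    apply Finset.sum_congr rfl; intro d _
    ring
  have hY : Yq e P f g h x + Yq e P g h f x + Yq e P h f g x = 0 := by
    rw [hYcan f g h, hYcan g h f, hYcan h f g]
    rw [sum3_cyc (fun a b c => Dd (e a) g x * Dd (e b) h x * Dd (e c) f x
          * ∑ d, P a d x * Dd (e d) (P b c) x),
        sum3_cyc' (fun a b c => Dd (e a) h x * Dd (e b) f x * Dd (e c) g x
          * ∑ d, P a d x * Dd (e d) (P b c) x)]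
    rw [← Finset.sum_add_distrib, ← Finset.sum_add_distrib]
    rw [← Finset.sum_const_zero (s := (Finset.univ : Finset ι))]
    apply Finset.sum_congr rfl; intro a _
    rw [← Finset.sum_add_distrib, ← Finset.sum_add_distrib]
    rw [← Finset.sum_const_zero (s := (Finset.univ : Finset ι))]
    apply Finset.sum_congr rfl; intro b _
    rw [← Finset.sum_add_distrib, ← Finset.sum_add_distrib]
    rw [← Finset.sum_const_zero (s := (Finset.univ : Finset ι))]
    apply Finset.sum_congr rfl; intro c _
    have hj := hjac x a b c
    have hsplit : (∑ d, P a d x * Dd (e d) (P b c) x) + (∑ d, P b d x * Dd (e d) (P c a) x)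
        + (∑ d, P c d x * Dd (e d) (P a b) x) = 0 := by
      rw [← Finset.sum_add_distrib, ← Finset.sum_add_distrib]; exact hj
    linear_combination (Dd (e a) f x * Dd (e b) g x * Dd (e c) h x) * hsplit
  have k1 := key f g h hf hg hh
  have k2 := key g h f hg hh hf
  have k3 := key h f g hh hf hg
  have x1 := hX f g h hg
  have x2 := hX g h f hh
  have x3 := hX h f g hf
  linarith [k1, k2, k3, x1, x2, x3, hY]

-- extra Dd lemmas
section DdExtra
variable {E F : Type*} [NormedAddCommGroup E] [NormedSpace ℝ E]
  [NormedAddCommGroup F] [NormedSpace ℝ F]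

lemma Dd_zero (f : E → ℝ) (x : E) : Dd (0 : E) f x = 0 := by simp [Dd]

lemma Dd_const (v : E) (c : ℝ) (x : E) : Dd v (fun _ => c) x = 0 := by simp [Dd]

lemma Dd_add (v : E) {f g : E → ℝ} {x : E} (hf : DifferentiableAt ℝ f x)
    (hg : DifferentiableAt ℝ g x) :
    Dd v (fun y => f y + g y) x = Dd v f x + Dd v g x := by
  simp [Dd, fderiv_fun_add hf hg]

lemma Dd_neg (v : E) (f : E → ℝ) (x : E) : Dd v (fun y => -f y) x = -Dd v f x := by
  simp [Dd, fderiv_neg]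

lemma Dd_sub (v : E) {f g : E → ℝ} {x : E} (hf : DifferentiableAt ℝ f x)
    (hg : DifferentiableAt ℝ g x) :
    Dd v (fun y => f y - g y) x = Dd v f x - Dd v g x := by
  simp [Dd, fderiv_fun_sub hf hg]

lemma Dd_clm_comp (v : E) (L : E →L[ℝ] F) {G : F → ℝ} {x : E}
    (hG : DifferentiableAt ℝ G (L x)) :
    Dd v (fun y => G (L y)) x = Dd (L v) G (L x) := by
  have h : fderiv ℝ (G ∘ L) x = (fderiv ℝ G (L x)).comp (L : E →L[ℝ] F) := by
    rw [fderiv_comp x hG L.differentiableAt, L.fderiv]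
  have h2 : (fun y => G (L y)) = G ∘ L := rfl
  simp only [Dd, h2, h]; rfl

lemma sum_antisym_symm {κ : Type*} [Fintype κ] (C S : κ → κ → ℝ)
    (hC : ∀ σ τ, C σ τ = -C τ σ) (hS : ∀ σ τ, S σ τ = S τ σ) :
    ∑ σ, ∑ τ, C σ τ * S σ τ = 0 := by
  have h : ∑ σ, ∑ τ, C σ τ * S σ τ = -∑ σ, ∑ τ, C σ τ * S σ τ := by
    nth_rewrite 1 [Finset.sum_comm]
    rw [← Finset.sum_neg_distrib]
    apply Finset.sum_congr rfl; intro σ _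
    rw [← Finset.sum_neg_distrib]
    apply Finset.sum_congr rfl; intro τ _
    rw [hC τ σ, hS τ σ]; ring
  linarith

end DdExtra

lemma pdY_coord (n : ℕ) (a β : Fin n) (y : Vec n) :
    pdY n (fun y => y a) β y = (Pi.single β 1 : Vec n) a := by
  have h : (fun y : Vec n => y a)
      = ⇑(ContinuousLinearMap.proj (R := ℝ) (φ := fun _ : Fin n => ℝ) a) := rfl
  show fderiv ℝ (fun y : Vec n => y a) y (Pi.single β 1) = _
  rw [h, ContinuousLinearMap.fderiv]
  rfl

lemma coord_contDiff (n : ℕ) (a : Fin n) : ContDiff ℝ (⊤ : ℕ∞) (fun y : Vec n => y a) :=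
  (ContinuousLinearMap.proj (R := ℝ) (φ := fun _ : Fin n => ℝ) a).contDiff

lemma fib_coord (n : ℕ) (Ψ : Vec n → Fin n → Fin n → ℝ) (b c : Fin n) :
    fibBracket n Ψ (fun y => y b) (fun y => y c) = fun y => Ψ y b c := by
  funext y
  unfold fibBracket
  simp [pdY_coord, Pi.single_apply]

lemma fib_coord_left (n : ℕ) (Ψ : Vec n → Fin n → Fin n → ℝ) (a : Fin n) (G : Vec n → ℝ)
    (y : Vec n) :
    fibBracket n Ψ (fun y => y a) G y = ∑ σ, Ψ y a σ * pdY n G σ y := by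
  unfold fibBracket
  simp [pdY_coord, Pi.single_apply]

lemma psJ (n : ℕ) (Ψ : Vec n → Fin n → Fin n → ℝ)
    (hΨjacobi : ∀ f g h : Vec n → ℝ, ContDiff ℝ (⊤ : ℕ∞) f → ContDiff ℝ (⊤ : ℕ∞) g → ContDiff ℝ (⊤ : ℕ∞) h →
      ∀ y, fibBracket n Ψ f (fibBracket n Ψ g h) y
          + fibBracket n Ψ g (fibBracket n Ψ h f) y
          + fibBracket n Ψ h (fibBracket n Ψ f g) y = 0)
    (y : Vec n) (a b c : Fin n) :
    ∑ σ, (Ψ y a σ * pdY n (fun y => Ψ y b c) σ y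
      + Ψ y b σ * pdY n (fun y => Ψ y c a) σ y
      + Ψ y c σ * pdY n (fun y => Ψ y a b) σ y) = 0 := by
  have h := hΨjacobi (fun y => y a) (fun y => y b) (fun y => y c)
    (coord_contDiff n a) (coord_contDiff n b) (coord_contDiff n c) y
  rw [fib_coord n Ψ b c, fib_coord n Ψ c a, fib_coord n Ψ a b,
    fib_coord_left n Ψ a _ y, fib_coord_left n Ψ b _ y, fib_coord_left n Ψ c _ y] at h
  rw [← h, ← Finset.sum_add_distrib, ← Finset.sum_add_distrib]
section Inst
variable (m n : ℕ) (Ψ : Vec n → Fin n → Fin n → ℝ) (A : Vec m → Vec n → Fin m → ℝ)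

abbrev Wsp (m n : ℕ) : Type := Vec m × Vec n

def uqv (j : Fin m) : Wsp m n := (Pi.single j 1, 0)
def uyv (σ : Fin n) : Wsp m n := (0, Pi.single σ 1)

def Afn (i : Fin m) : Wsp m n → ℝ := fun w => A w.1 w.2 i
def ψb (α β : Fin n) : Wsp m n → ℝ := fun w => Ψ w.2 α β
def ayb (σ : Fin n) (i : Fin m) : Wsp m n → ℝ := Dd (uyv m n σ) (Afn m n A i)
def aqb (l i : Fin m) : Wsp m n → ℝ := Dd (uqv m n l) (Afn m n A i)
def Bfb (i : Fin m) (α : Fin n) : Wsp m n → ℝ :=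
  fun w => -(∑ β, ψb m n Ψ α β w * ayb m n A β i w)
def Ffb (i j : Fin m) : Wsp m n → ℝ :=
  fun w => aqb m n A i j w - aqb m n A j i w
    + ∑ α, ∑ β, ψb m n Ψ α β w * ayb m n A α i w * ayb m n A β j w
def dψb (σ α β : Fin n) : Wsp m n → ℝ := Dd (uyv m n σ) (ψb m n Ψ α β)
def ayyb (σ τ : Fin n) (i : Fin m) : Wsp m n → ℝ := Dd (uyv m n σ) (ayb m n A τ i)
def aqyb (l : Fin m) (τ : Fin n) (i : Fin m) : Wsp m n → ℝ := Dd (uqv m n l) (ayb m n A τ i)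
def aqqb (l k i : Fin m) : Wsp m n → ℝ := Dd (uqv m n l) (aqb m n A k i)

variable (hΨs : ∀ α β, ContDiff ℝ (⊤ : ℕ∞) (fun y => Ψ y α β))
  (hΨsk : ∀ y α β, Ψ y α β = - Ψ y β α)
  (hA : ∀ i, ContDiff ℝ (⊤ : ℕ∞) (fun qy : Vec m × Vec n => A qy.1 qy.2 i))

section Smooth
include hA

lemma smooth_ayb (σ : Fin n) (i : Fin m) : ContDiff ℝ (⊤ : ℕ∞) (ayb m n A σ i) :=
  contDiff_Dd _ (hA i)

lemma smooth_aqb (l i : Fin m) : ContDiff ℝ (⊤ : ℕ∞) (aqb m n A l i) :=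
  contDiff_Dd _ (hA i)

end Smooth

lemma smooth_ψb (α β : Fin n) (hΨs : ∀ α β, ContDiff ℝ (⊤ : ℕ∞) (fun y => Ψ y α β)) :
    ContDiff ℝ (⊤ : ℕ∞) (ψb m n Ψ α β) :=
  (hΨs α β).comp contDiff_snd

lemma smooth_Bfb (i : Fin m) (α : Fin n)
    (hΨs : ∀ α β, ContDiff ℝ (⊤ : ℕ∞) (fun y => Ψ y α β))
    (hA : ∀ i, ContDiff ℝ (⊤ : ℕ∞) (fun qy : Vec m × Vec n => A qy.1 qy.2 i)) :
    ContDiff ℝ (⊤ : ℕ∞) (Bfb m n Ψ A i α) := by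
  unfold Bfb
  exact (ContDiff.sum fun β _ =>
    (smooth_ψb m n Ψ α β hΨs).mul (smooth_ayb m n A hA β i)).neg

lemma smooth_Ffb (i j : Fin m)
    (hΨs : ∀ α β, ContDiff ℝ (⊤ : ℕ∞) (fun y => Ψ y α β))
    (hA : ∀ i, ContDiff ℝ (⊤ : ℕ∞) (fun qy : Vec m × Vec n => A qy.1 qy.2 i)) :
    ContDiff ℝ (⊤ : ℕ∞) (Ffb m n Ψ A i j) := by
  unfold Ffb
  exact ((smooth_aqb m n A hA i j).sub (smooth_aqb m n A hA j i)).add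
    (ContDiff.sum fun α _ => ContDiff.sum fun β _ =>
      ((smooth_ψb m n Ψ α β hΨs).mul (smooth_ayb m n A hA α i)).mul
        (smooth_ayb m n A hA β j))

-- derivative of ψb in q-direction vanishes; in y-direction it is pdY
lemma ψb_comp (α β : Fin n) :
    ψb m n Ψ α β = fun w : Wsp m n =>
      (fun y => Ψ y α β) ((ContinuousLinearMap.snd ℝ (Vec m) (Vec n)) w) := rfl

lemma Dq_ψb (l : Fin m) (α β : Fin n) (w : Wsp m n)
    (hΨs : ∀ α β, ContDiff ℝ (⊤ : ℕ∞) (fun y => Ψ y α β)) :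
    Dd (uqv m n l) (ψb m n Ψ α β) w = 0 := by
  rw [ψb_comp, Dd_clm_comp _ _ (((hΨs α β).differentiable (by simp)).differentiableAt)]
  show Dd (0 : Vec n) _ _ = 0
  exact Dd_zero _ _

lemma dψb_eq (σ α β : Fin n) (w : Wsp m n)
    (hΨs : ∀ α β, ContDiff ℝ (⊤ : ℕ∞) (fun y => Ψ y α β)) :
    dψb m n Ψ σ α β w = pdY n (fun y => Ψ y α β) σ w.2 := by
  unfold dψb
  rw [ψb_comp, Dd_clm_comp _ _ (((hΨs α β).differentiable (by simp)).differentiableAt)]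
  rfl

-- pointwise Jacobi for ψb on W
lemma psJW (w : Wsp m n) (a b c : Fin n)
    (hΨs : ∀ α β, ContDiff ℝ (⊤ : ℕ∞) (fun y => Ψ y α β))
    (hΨj : ∀ f g h : Vec n → ℝ, ContDiff ℝ (⊤ : ℕ∞) f → ContDiff ℝ (⊤ : ℕ∞) g → ContDiff ℝ (⊤ : ℕ∞) h →
      ∀ y, fibBracket n Ψ f (fibBracket n Ψ g h) y
          + fibBracket n Ψ g (fibBracket n Ψ h f) y
          + fibBracket n Ψ h (fibBracket n Ψ f g) y = 0) :
    ∑ σ, (ψb m n Ψ a σ w * dψb m n Ψ σ b c w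
      + ψb m n Ψ b σ w * dψb m n Ψ σ c a w
      + ψb m n Ψ c σ w * dψb m n Ψ σ a b w) = 0 := by
  have h := psJ n Ψ hΨj w.2 a b c
  rw [← h]
  apply Finset.sum_congr rfl; intro σ _
  rw [dψb_eq m n Ψ σ b c w hΨs, dψb_eq m n Ψ σ c a w hΨs, dψb_eq m n Ψ σ a b w hΨs]
  rfl

-- skew lemmas
lemma ψb_skew (α β : Fin n) (hΨsk : ∀ y α β, Ψ y α β = - Ψ y β α) :
    ψb m n Ψ α β = fun w => -ψb m n Ψ β α w :=
  funext fun w => hΨsk w.2 α β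

lemma dψb_skew (σ α β : Fin n) (w : Wsp m n) (hΨsk : ∀ y α β, Ψ y α β = - Ψ y β α) :
    dψb m n Ψ σ α β w = -dψb m n Ψ σ β α w := by
  unfold dψb
  rw [ψb_skew m n Ψ α β hΨsk, Dd_neg]

-- Clairaut
lemma ayyb_symm (σ τ : Fin n) (i : Fin m) (w : Wsp m n)
    (hA : ∀ i, ContDiff ℝ (⊤ : ℕ∞) (fun qy : Vec m × Vec n => A qy.1 qy.2 i)) :
    ayyb m n A σ τ i w = ayyb m n A τ σ i w :=
  Dd_comm _ _ (hA i) w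

lemma ayq_eq_aqy (σ : Fin n) (l i : Fin m) (w : Wsp m n)
    (hA : ∀ i, ContDiff ℝ (⊤ : ℕ∞) (fun qy : Vec m × Vec n => A qy.1 qy.2 i)) :
    Dd (uyv m n σ) (aqb m n A l i) w = aqyb m n A l σ i w :=
  Dd_comm _ _ (hA i) w

lemma aqqb_symm (l k i : Fin m) (w : Wsp m n)
    (hA : ∀ i, ContDiff ℝ (⊤ : ℕ∞) (fun qy : Vec m × Vec n => A qy.1 qy.2 i)) :
    aqqb m n A l k i w = aqqb m n A k l i w :=
  Dd_comm _ _ (hA i) w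

end Inst
section Expand
variable (m n : ℕ) (Ψ : Vec n → Fin n → Fin n → ℝ) (A : Vec m → Vec n → Fin m → ℝ)
variable (hΨs : ∀ α β, ContDiff ℝ (⊤ : ℕ∞) (fun y => Ψ y α β))
  (hA : ∀ i, ContDiff ℝ (⊤ : ℕ∞) (fun qy : Vec m × Vec n => A qy.1 qy.2 i))

private lemma dAt {E : Type*} [NormedAddCommGroup E] [NormedSpace ℝ E] {F : E → ℝ}
    (hF : ContDiff ℝ (⊤ : ℕ∞) F) (x : E) : DifferentiableAt ℝ F x :=
  (hF.differentiable (by simp)).differentiableAt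

include hΨs hA in
lemma DBf_expand (v : Wsp m n) (i : Fin m) (α : Fin n) (w : Wsp m n) :
    Dd v (Bfb m n Ψ A i α) w
      = -∑ τ, (Dd v (ψb m n Ψ α τ) w * ayb m n A τ i w
          + ψb m n Ψ α τ w * Dd v (ayb m n A τ i) w) := by
  unfold Bfb
  rw [Dd_neg v (fun w => ∑ β, ψb m n Ψ α β w * ayb m n A β i w) w]
  congr 1
  rw [Dd_sum v _ (fun τ _ => dAt ((smooth_ψb m n Ψ α τ hΨs).mul (smooth_ayb m n A hA τ i)) w)]
  apply Finset.sum_congr rfl; intro τ _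
  rw [Dd_mul v (dAt (smooth_ψb m n Ψ α τ hΨs) w) (dAt (smooth_ayb m n A hA τ i) w)]
  ring

include hΨs hA in
lemma DFf_expand (v : Wsp m n) (i j : Fin m) (w : Wsp m n) :
    Dd v (Ffb m n Ψ A i j) w
      = Dd v (aqb m n A i j) w - Dd v (aqb m n A j i) w
        + ∑ α, ∑ β, (Dd v (ψb m n Ψ α β) w * ayb m n A α i w * ayb m n A β j w
            + ψb m n Ψ α β w * Dd v (ayb m n A α i) w * ayb m n A β j w
            + ψb m n Ψ α β w * ayb m n A α i w * Dd v (ayb m n A β j) w) := by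
  unfold Ffb
  rw [Dd_add v ((dAt (smooth_aqb m n A hA i j) w).fun_sub (dAt (smooth_aqb m n A hA j i) w))
      (dAt (ContDiff.sum fun α _ => ContDiff.sum fun β _ =>
        ((smooth_ψb m n Ψ α β hΨs).mul (smooth_ayb m n A hA α i)).mul
          (smooth_ayb m n A hA β j)) w),
    Dd_sub v (dAt (smooth_aqb m n A hA i j) w) (dAt (smooth_aqb m n A hA j i) w)]
  congr 1
  rw [Dd_sum v _ (fun α _ => dAt (ContDiff.sum fun β _ =>
      ((smooth_ψb m n Ψ α β hΨs).mul (smooth_ayb m n A hA α i)).mul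
        (smooth_ayb m n A hA β j)) w)]
  apply Finset.sum_congr rfl; intro α _
  rw [Dd_sum v _ (fun β _ => dAt
      (((smooth_ψb m n Ψ α β hΨs).mul (smooth_ayb m n A hA α i)).mul
        (smooth_ayb m n A hA β j)) w)]
  apply Finset.sum_congr rfl; intro β _
  rw [Dd_mul v (dAt ((smooth_ψb m n Ψ α β hΨs).mul (smooth_ayb m n A hA α i)) w)
      (dAt (smooth_ayb m n A hA β j) w),
    Dd_mul v (dAt (smooth_ψb m n Ψ α β hΨs) w) (dAt (smooth_ayb m n A hA α i) w)]
  ring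

include hΨs hA in
lemma DBf_q (l : Fin m) (i : Fin m) (α : Fin n) (w : Wsp m n) :
    Dd (uqv m n l) (Bfb m n Ψ A i α) w
      = -∑ τ, ψb m n Ψ α τ w * aqyb m n A l τ i w := by
  rw [DBf_expand m n Ψ A hΨs hA (uqv m n l) i α w]
  congr 1
  apply Finset.sum_congr rfl; intro τ _
  rw [Dq_ψb m n Ψ l α τ w hΨs]
  show 0 * ayb m n A τ i w + ψb m n Ψ α τ w * aqyb m n A l τ i w = _
  ring

include hΨs hA in
lemma DBf_y (σ : Fin n) (i : Fin m) (α : Fin n) (w : Wsp m n) :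
    Dd (uyv m n σ) (Bfb m n Ψ A i α) w
      = -∑ τ, (dψb m n Ψ σ α τ w * ayb m n A τ i w
          + ψb m n Ψ α τ w * ayyb m n A σ τ i w) := by
  rw [DBf_expand m n Ψ A hΨs hA (uyv m n σ) i α w]
  rfl

include hΨs hA in
lemma DFf_q (l : Fin m) (i j : Fin m) (w : Wsp m n) :
    Dd (uqv m n l) (Ffb m n Ψ A i j) w
      = aqqb m n A l i j w - aqqb m n A l j i w
        + ∑ α, ∑ β, (ψb m n Ψ α β w * aqyb m n A l α i w * ayb m n A β j w
            + ψb m n Ψ α β w * ayb m n A α i w * aqyb m n A l β j w) := by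
  rw [DFf_expand m n Ψ A hΨs hA (uqv m n l) i j w]
  congr 1
  apply Finset.sum_congr rfl; intro α _
  apply Finset.sum_congr rfl; intro β _
  rw [Dq_ψb m n Ψ l α β w hΨs]
  show 0 * ayb m n A α i w * ayb m n A β j w
      + ψb m n Ψ α β w * aqyb m n A l α i w * ayb m n A β j w
      + ψb m n Ψ α β w * ayb m n A α i w * aqyb m n A l β j w = _
  ring

include hΨs hA in
lemma DFf_y (σ : Fin n) (i j : Fin m) (w : Wsp m n) :
    Dd (uyv m n σ) (Ffb m n Ψ A i j) w
      = aqyb m n A i σ j w - aqyb m n A j σ i w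
        + ∑ α, ∑ β, (dψb m n Ψ σ α β w * ayb m n A α i w * ayb m n A β j w
            + ψb m n Ψ α β w * ayyb m n A σ α i w * ayb m n A β j w
            + ψb m n Ψ α β w * ayb m n A α i w * ayyb m n A σ β j w) := by
  rw [DFf_expand m n Ψ A hΨs hA (uyv m n σ) i j w,
    ayq_eq_aqy m n A σ i j w hA, ayq_eq_aqy m n A σ j i w hA]
  rfl

end Expand
section Cases
variable (m n : ℕ) (Ψ : Vec n → Fin n → Fin n → ℝ) (A : Vec m → Vec n → Fin m → ℝ)
variable (hΨs : ∀ α β, ContDiff ℝ (⊤ : ℕ∞) (fun y => Ψ y α β))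
  (hΨsk : ∀ y α β, Ψ y α β = - Ψ y β α)
  (hΨj : ∀ f g h : Vec n → ℝ, ContDiff ℝ (⊤ : ℕ∞) f → ContDiff ℝ (⊤ : ℕ∞) g → ContDiff ℝ (⊤ : ℕ∞) h →
      ∀ y, fibBracket n Ψ f (fibBracket n Ψ g h) y
          + fibBracket n Ψ g (fibBracket n Ψ h f) y
          + fibBracket n Ψ h (fibBracket n Ψ f g) y = 0)
  (hA : ∀ i, ContDiff ℝ (⊤ : ℕ∞) (fun qy : Vec m × Vec n => A qy.1 qy.2 i))

include hΨs hΨsk hΨj hA in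
lemma casePYY (i : Fin m) (α β : Fin n) (w : Wsp m n) :
    ∑ σ, (Bfb m n Ψ A i σ w * dψb m n Ψ σ α β w
      - ψb m n Ψ α σ w * Dd (uyv m n σ) (Bfb m n Ψ A i β) w
      + ψb m n Ψ β σ w * Dd (uyv m n σ) (Bfb m n Ψ A i α) w) = 0 := by
  have step1 : ∀ σ, Bfb m n Ψ A i σ w * dψb m n Ψ σ α β w
      - ψb m n Ψ α σ w * Dd (uyv m n σ) (Bfb m n Ψ A i β) w
      + ψb m n Ψ β σ w * Dd (uyv m n σ) (Bfb m n Ψ A i α) w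
      = ∑ τ, (ayb m n A τ i w * (-(ψb m n Ψ σ τ w) * dψb m n Ψ σ α β w
            + ψb m n Ψ α σ w * dψb m n Ψ σ β τ w - ψb m n Ψ β σ w * dψb m n Ψ σ α τ w)
          + (ψb m n Ψ α σ w * ψb m n Ψ β τ w - ψb m n Ψ β σ w * ψb m n Ψ α τ w)
            * ayyb m n A σ τ i w) := by
    intro σ
    rw [DBf_y m n Ψ A hΨs hA σ i β w, DBf_y m n Ψ A hΨs hA σ i α w]
    show (-(∑ τ, ψb m n Ψ σ τ w * ayb m n A τ i w)) * dψb m n Ψ σ α β w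
        - ψb m n Ψ α σ w * _ + ψb m n Ψ β σ w * _ = _
    simp only [mul_neg, neg_mul, sub_eq_add_neg, neg_neg, Finset.sum_mul, Finset.mul_sum,
      ← Finset.sum_neg_distrib]
    rw [← Finset.sum_add_distrib, ← Finset.sum_add_distrib]
    apply Finset.sum_congr rfl; intro τ _
    ring
  rw [Finset.sum_congr rfl (fun σ _ => step1 σ)]
  rw [Finset.sum_comm]
  have step2 : ∀ τ, ∑ σ, (ayb m n A τ i w * (-(ψb m n Ψ σ τ w) * dψb m n Ψ σ α β w
        + ψb m n Ψ α σ w * dψb m n Ψ σ β τ w - ψb m n Ψ β σ w * dψb m n Ψ σ α τ w)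
      + (ψb m n Ψ α σ w * ψb m n Ψ β τ w - ψb m n Ψ β σ w * ψb m n Ψ α τ w)
        * ayyb m n A σ τ i w)
      = ayb m n A τ i w * ∑ σ, (ψb m n Ψ τ σ w * dψb m n Ψ σ α β w
          + ψb m n Ψ α σ w * dψb m n Ψ σ β τ w + ψb m n Ψ β σ w * dψb m n Ψ σ τ α w)
        + ∑ σ, (ψb m n Ψ α σ w * ψb m n Ψ β τ w - ψb m n Ψ β σ w * ψb m n Ψ α τ w)
            * ayyb m n A σ τ i w := by
    intro τ
    rw [Finset.mul_sum, ← Finset.sum_add_distrib]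
    apply Finset.sum_congr rfl; intro σ _
    have h1 : ψb m n Ψ σ τ w = -ψb m n Ψ τ σ w := hΨsk w.2 σ τ
    have h2 : dψb m n Ψ σ α τ w = -dψb m n Ψ σ τ α w := dψb_skew m n Ψ σ α τ w hΨsk
    rw [h1, h2]; ring
  rw [Finset.sum_congr rfl (fun τ _ => step2 τ), Finset.sum_add_distrib]
  have z1 : ∑ τ, ayb m n A τ i w * ∑ σ, (ψb m n Ψ τ σ w * dψb m n Ψ σ α β w
      + ψb m n Ψ α σ w * dψb m n Ψ σ β τ w + ψb m n Ψ β σ w * dψb m n Ψ σ τ α w) = 0 := by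
    apply Finset.sum_eq_zero; intro τ _
    rw [psJW m n Ψ w τ α β hΨs hΨj]; ring
  have z2 : ∑ τ, ∑ σ, (ψb m n Ψ α σ w * ψb m n Ψ β τ w - ψb m n Ψ β σ w * ψb m n Ψ α τ w)
      * ayyb m n A σ τ i w = 0 := by
    rw [Finset.sum_comm]
    apply sum_antisym_symm
    · intro σ τ; ring
    · intro σ τ; exact ayyb_symm m n A σ τ i w hA
  rw [z1, z2]; ring
end Cases
section CasePPY
variable (m n : ℕ) (Ψ : Vec n → Fin n → Fin n → ℝ) (A : Vec m → Vec n → Fin m → ℝ)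
variable (hΨs : ∀ α β, ContDiff ℝ (⊤ : ℕ∞) (fun y => Ψ y α β))
  (hΨsk : ∀ y α β, Ψ y α β = - Ψ y β α)
  (hΨj : ∀ f g h : Vec n → ℝ, ContDiff ℝ (⊤ : ℕ∞) f → ContDiff ℝ (⊤ : ℕ∞) g → ContDiff ℝ (⊤ : ℕ∞) h →
      ∀ y, fibBracket n Ψ f (fibBracket n Ψ g h) y
          + fibBracket n Ψ g (fibBracket n Ψ h f) y
          + fibBracket n Ψ h (fibBracket n Ψ f g) y = 0)
  (hA : ∀ i, ContDiff ℝ (⊤ : ℕ∞) (fun qy : Vec m × Vec n => A qy.1 qy.2 i))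


include hΨsk in
lemma ψb_skew_pt (a b : Fin n) (w : Wsp m n) : ψb m n Ψ a b w = -ψb m n Ψ b a w :=
  hΨsk w.2 a b

include hΨs hΨsk hΨj hA in
lemma casePPY (i j : Fin m) (α : Fin n) (w : Wsp m n) :
    (Dd (uqv m n i) (Bfb m n Ψ A j α) w - Dd (uqv m n j) (Bfb m n Ψ A i α) w)
    + ∑ σ, (Bfb m n Ψ A i σ w * Dd (uyv m n σ) (Bfb m n Ψ A j α) w
        - Bfb m n Ψ A j σ w * Dd (uyv m n σ) (Bfb m n Ψ A i α) w
        + ψb m n Ψ α σ w * Dd (uyv m n σ) (Ffb m n Ψ A i j) w) = 0 := by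
  rw [DBf_q m n Ψ A hΨs hA i j α w, DBf_q m n Ψ A hΨs hA j i α w]
  have hsplit : ∑ σ, (Bfb m n Ψ A i σ w * Dd (uyv m n σ) (Bfb m n Ψ A j α) w
        - Bfb m n Ψ A j σ w * Dd (uyv m n σ) (Bfb m n Ψ A i α) w
        + ψb m n Ψ α σ w * Dd (uyv m n σ) (Ffb m n Ψ A i j) w)
      = (∑ σ, Bfb m n Ψ A i σ w * Dd (uyv m n σ) (Bfb m n Ψ A j α) w)
        - (∑ σ, Bfb m n Ψ A j σ w * Dd (uyv m n σ) (Bfb m n Ψ A i α) w)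
        + (∑ σ, ψb m n Ψ α σ w * Dd (uyv m n σ) (Ffb m n Ψ A i j) w) := by
    rw [Finset.sum_add_distrib, Finset.sum_sub_distrib]
  rw [hsplit]
  -- expansion of the three σ-sums
  have H1 : ∑ σ, Bfb m n Ψ A i σ w * Dd (uyv m n σ) (Bfb m n Ψ A j α) w
      = ∑ σ, ∑ τ, ∑ ρ, (ψb m n Ψ σ τ w * ayb m n A τ i w * dψb m n Ψ σ α ρ w * ayb m n A ρ j w
          + ψb m n Ψ σ τ w * ayb m n A τ i w * ψb m n Ψ α ρ w * ayyb m n A σ ρ j w) := by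
    apply Finset.sum_congr rfl; intro σ _
    rw [DBf_y m n Ψ A hΨs hA σ j α w]
    show (-(∑ τ, ψb m n Ψ σ τ w * ayb m n A τ i w)) * _ = _
    rw [neg_mul_neg, Finset.sum_mul_sum]
    apply Finset.sum_congr rfl; intro τ _
    apply Finset.sum_congr rfl; intro ρ _
    ring
  have H2 : ∑ σ, Bfb m n Ψ A j σ w * Dd (uyv m n σ) (Bfb m n Ψ A i α) w
      = ∑ σ, ∑ τ, ∑ ρ, (ψb m n Ψ σ τ w * ayb m n A τ j w * dψb m n Ψ σ α ρ w * ayb m n A ρ i w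
          + ψb m n Ψ σ τ w * ayb m n A τ j w * ψb m n Ψ α ρ w * ayyb m n A σ ρ i w) := by
    apply Finset.sum_congr rfl; intro σ _
    rw [DBf_y m n Ψ A hΨs hA σ i α w]
    show (-(∑ τ, ψb m n Ψ σ τ w * ayb m n A τ j w)) * _ = _
    rw [neg_mul_neg, Finset.sum_mul_sum]
    apply Finset.sum_congr rfl; intro τ _
    apply Finset.sum_congr rfl; intro ρ _
    ring
  have H3 : ∑ σ, ψb m n Ψ α σ w * Dd (uyv m n σ) (Ffb m n Ψ A i j) w
      = (∑ σ, ψb m n Ψ α σ w * (aqyb m n A i σ j w - aqyb m n A j σ i w))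
        + ∑ σ, ∑ τ, ∑ ρ, (ψb m n Ψ α σ w * dψb m n Ψ σ τ ρ w * ayb m n A τ i w * ayb m n A ρ j w
          + ψb m n Ψ α σ w * ψb m n Ψ τ ρ w * ayyb m n A σ τ i w * ayb m n A ρ j w
          + ψb m n Ψ α σ w * ψb m n Ψ τ ρ w * ayb m n A τ i w * ayyb m n A σ ρ j w) := by
    rw [← Finset.sum_add_distrib]
    apply Finset.sum_congr rfl; intro σ _
    rw [DFf_y m n Ψ A hΨs hA σ i j w, mul_add, Finset.mul_sum]
    congr 1
    apply Finset.sum_congr rfl; intro τ _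
    rw [Finset.mul_sum]
    apply Finset.sum_congr rfl; intro ρ _
    ring
  rw [H1, H2, H3]
  -- the single-sum parts cancel
  have hC : ∑ σ, ψb m n Ψ α σ w * (aqyb m n A i σ j w - aqyb m n A j σ i w)
      = (∑ τ, ψb m n Ψ α τ w * aqyb m n A i τ j w)
        - ∑ τ, ψb m n Ψ α τ w * aqyb m n A j τ i w := by
    rw [← Finset.sum_sub_distrib]
    apply Finset.sum_congr rfl; intro σ _
    ring
  -- split the triple sums into individual summand sums
  simp only [Finset.sum_add_distrib]
  -- names: U1 U2 V1 V2 W1 W2 W3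
  -- c1 : U1 - V1 + W1 = 0
  have c1 : (∑ σ, ∑ τ, ∑ ρ, ψb m n Ψ σ τ w * ayb m n A τ i w * dψb m n Ψ σ α ρ w * ayb m n A ρ j w)
      - (∑ σ, ∑ τ, ∑ ρ, ψb m n Ψ σ τ w * ayb m n A τ j w * dψb m n Ψ σ α ρ w * ayb m n A ρ i w)
      + (∑ σ, ∑ τ, ∑ ρ, ψb m n Ψ α σ w * dψb m n Ψ σ τ ρ w * ayb m n A τ i w * ayb m n A ρ j w)
      = 0 := by
    have hV1 : (∑ σ, ∑ τ, ∑ ρ, ψb m n Ψ σ τ w * ayb m n A τ j w * dψb m n Ψ σ α ρ w * ayb m n A ρ i w)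
        = ∑ σ, ∑ τ, ∑ ρ, ψb m n Ψ σ ρ w * ayb m n A ρ j w * dψb m n Ψ σ α τ w * ayb m n A τ i w := by
      apply Finset.sum_congr rfl; intro σ _
      exact Finset.sum_comm
    rw [hV1]
    have merge : (∑ σ, ∑ τ, ∑ ρ, ψb m n Ψ σ τ w * ayb m n A τ i w * dψb m n Ψ σ α ρ w * ayb m n A ρ j w)
        - (∑ σ, ∑ τ, ∑ ρ, ψb m n Ψ σ ρ w * ayb m n A ρ j w * dψb m n Ψ σ α τ w * ayb m n A τ i w)
        + (∑ σ, ∑ τ, ∑ ρ, ψb m n Ψ α σ w * dψb m n Ψ σ τ ρ w * ayb m n A τ i w * ayb m n A ρ j w)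
        = ∑ σ, ∑ τ, ∑ ρ, ((ψb m n Ψ σ τ w * ayb m n A τ i w * dψb m n Ψ σ α ρ w * ayb m n A ρ j w
            - ψb m n Ψ σ ρ w * ayb m n A ρ j w * dψb m n Ψ σ α τ w * ayb m n A τ i w)
          + ψb m n Ψ α σ w * dψb m n Ψ σ τ ρ w * ayb m n A τ i w * ayb m n A ρ j w) := by
      simp only [Finset.sum_add_distrib, Finset.sum_sub_distrib]
    rw [merge, sum3_cyc' (fun σ τ ρ => _)]
    apply Finset.sum_eq_zero; intro τ _
    apply Finset.sum_eq_zero; intro ρ _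
    have hfac : ∑ σ, ((ψb m n Ψ σ τ w * ayb m n A τ i w * dψb m n Ψ σ α ρ w * ayb m n A ρ j w
          - ψb m n Ψ σ ρ w * ayb m n A ρ j w * dψb m n Ψ σ α τ w * ayb m n A τ i w)
        + ψb m n Ψ α σ w * dψb m n Ψ σ τ ρ w * ayb m n A τ i w * ayb m n A ρ j w)
        = (ayb m n A τ i w * ayb m n A ρ j w)
          * ∑ σ, (ψb m n Ψ τ σ w * dψb m n Ψ σ ρ α w + ψb m n Ψ ρ σ w * dψb m n Ψ σ α τ w
            + ψb m n Ψ α σ w * dψb m n Ψ σ τ ρ w) := by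
      rw [Finset.mul_sum]
      apply Finset.sum_congr rfl; intro σ _
      rw [ψb_skew_pt m n Ψ hΨsk σ τ w, ψb_skew_pt m n Ψ hΨsk σ ρ w,
        dψb_skew m n Ψ σ α ρ w hΨsk]
      ring
    rw [hfac, psJW m n Ψ w τ ρ α hΨs hΨj]
    ring
  -- c2 : U2 + W3 = 0
  have c2 : (∑ σ, ∑ τ, ∑ ρ, ψb m n Ψ σ τ w * ayb m n A τ i w * ψb m n Ψ α ρ w * ayyb m n A σ ρ j w)
      + (∑ σ, ∑ τ, ∑ ρ, ψb m n Ψ α σ w * ψb m n Ψ τ ρ w * ayb m n A τ i w * ayyb m n A σ ρ j w)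
      = 0 := by
    have merge : (∑ σ, ∑ τ, ∑ ρ, ψb m n Ψ σ τ w * ayb m n A τ i w * ψb m n Ψ α ρ w * ayyb m n A σ ρ j w)
        + (∑ σ, ∑ τ, ∑ ρ, ψb m n Ψ α σ w * ψb m n Ψ τ ρ w * ayb m n A τ i w * ayyb m n A σ ρ j w)
        = ∑ σ, ∑ τ, ∑ ρ, ((ψb m n Ψ σ τ w * ψb m n Ψ α ρ w + ψb m n Ψ α σ w * ψb m n Ψ τ ρ w)
            * ayb m n A τ i w) * ayyb m n A σ ρ j w := by
      simp only [← Finset.sum_add_distrib]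
      apply Finset.sum_congr rfl; intro σ _
      apply Finset.sum_congr rfl; intro τ _
      apply Finset.sum_congr rfl; intro ρ _
      ring
    rw [merge, Finset.sum_comm]
    apply Finset.sum_eq_zero; intro τ _
    apply sum_antisym_symm
    · intro σ ρ
      rw [ψb_skew_pt m n Ψ hΨsk ρ τ w, ψb_skew_pt m n Ψ hΨsk τ σ w]
      ring
    · intro σ ρ; exact ayyb_symm m n A σ ρ j w hA
  -- c3 : -V2 + W2 = 0
  have c3 : (∑ σ, ∑ τ, ∑ ρ, ψb m n Ψ α σ w * ψb m n Ψ τ ρ w * ayyb m n A σ τ i w * ayb m n A ρ j w)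
      - (∑ σ, ∑ τ, ∑ ρ, ψb m n Ψ σ τ w * ayb m n A τ j w * ψb m n Ψ α ρ w * ayyb m n A σ ρ i w)
      = 0 := by
    have hW2 : (∑ σ, ∑ τ, ∑ ρ, ψb m n Ψ α σ w * ψb m n Ψ τ ρ w * ayyb m n A σ τ i w * ayb m n A ρ j w)
        = ∑ σ, ∑ τ, ∑ ρ, ψb m n Ψ α σ w * ψb m n Ψ ρ τ w * ayyb m n A σ ρ i w * ayb m n A τ j w := by
      apply Finset.sum_congr rfl; intro σ _
      exact Finset.sum_comm
    rw [hW2]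
    have merge : (∑ σ, ∑ τ, ∑ ρ, ψb m n Ψ α σ w * ψb m n Ψ ρ τ w * ayyb m n A σ ρ i w * ayb m n A τ j w)
        - (∑ σ, ∑ τ, ∑ ρ, ψb m n Ψ σ τ w * ayb m n A τ j w * ψb m n Ψ α ρ w * ayyb m n A σ ρ i w)
        = ∑ σ, ∑ τ, ∑ ρ, ((ψb m n Ψ α σ w * ψb m n Ψ ρ τ w - ψb m n Ψ σ τ w * ψb m n Ψ α ρ w)
            * ayb m n A τ j w) * ayyb m n A σ ρ i w := by
      simp only [← Finset.sum_sub_distrib]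
      apply Finset.sum_congr rfl; intro σ _
      apply Finset.sum_congr rfl; intro τ _
      apply Finset.sum_congr rfl; intro ρ _
      ring
    rw [merge, Finset.sum_comm]
    apply Finset.sum_eq_zero; intro τ _
    apply sum_antisym_symm
    · intro σ ρ; ring
    · intro σ ρ; exact ayyb_symm m n A σ ρ i w hA
  linarith [c1, c2, c3, hC]
end CasePPY
section Sum4Perms
variable {ι : Type*} [Fintype ι]

def rotE4 : (ι × ι × ι × ι) ≃ (ι × ι × ι × ι) where
  toFun p := (p.2.2.2, p.1, p.2.1, p.2.2.1)
  invFun p := (p.2.1, p.2.2.1, p.2.2.2, p.1)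
  left_inv _ := rfl
  right_inv _ := rfl

def midE4 : (ι × ι × ι × ι) ≃ (ι × ι × ι × ι) where
  toFun p := (p.2.2.1, p.1, p.2.1, p.2.2.2)
  invFun p := (p.2.1, p.2.2.1, p.1, p.2.2.2)
  left_inv _ := rfl
  right_inv _ := rfl

lemma sum4_cyc3 (F : ι → ι → ι → ι → ℝ) :
    ∑ a, ∑ b, ∑ c, ∑ d, F a b c d = ∑ a, ∑ b, ∑ c, ∑ d, F a c d b := by
  rw [nest4, nest4]
  exact (Equiv.sum_comp (bl4 (ι := ι)).symm (fun p => F p.1 p.2.1 p.2.2.1 p.2.2.2)).symm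

lemma sum4_rot (F : ι → ι → ι → ι → ℝ) :
    ∑ a, ∑ b, ∑ c, ∑ d, F a b c d = ∑ a, ∑ b, ∑ c, ∑ d, F d a b c := by
  rw [nest4, nest4]
  exact (Equiv.sum_comp (rotE4 (ι := ι)) (fun p => F p.1 p.2.1 p.2.2.1 p.2.2.2)).symm

lemma sum4_mid (F : ι → ι → ι → ι → ℝ) :
    ∑ a, ∑ b, ∑ c, ∑ d, F a b c d = ∑ a, ∑ b, ∑ c, ∑ d, F c a b d := by
  rw [nest4, nest4]
  exact (Equiv.sum_comp (midE4 (ι := ι)) (fun p => F p.1 p.2.1 p.2.2.1 p.2.2.2)).symm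

end Sum4Perms

section CasePPP
variable (m n : ℕ) (Ψ : Vec n → Fin n → Fin n → ℝ) (A : Vec m → Vec n → Fin m → ℝ)
variable (hΨs : ∀ α β, ContDiff ℝ (⊤ : ℕ∞) (fun y => Ψ y α β))
  (hΨsk : ∀ y α β, Ψ y α β = - Ψ y β α)
  (hΨj : ∀ f g h : Vec n → ℝ, ContDiff ℝ (⊤ : ℕ∞) f → ContDiff ℝ (⊤ : ℕ∞) g → ContDiff ℝ (⊤ : ℕ∞) h →
      ∀ y, fibBracket n Ψ f (fibBracket n Ψ g h) y
          + fibBracket n Ψ g (fibBracket n Ψ h f) y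
          + fibBracket n Ψ h (fibBracket n Ψ f g) y = 0)
  (hA : ∀ i, ContDiff ℝ (⊤ : ℕ∞) (fun qy : Vec m × Vec n => A qy.1 qy.2 i))

include hΨs hA in
lemma expandBfDFf (a b c : Fin m) (w : Wsp m n) :
    ∑ σ, Bfb m n Ψ A a σ w * Dd (uyv m n σ) (Ffb m n Ψ A b c) w
    = (∑ σ, ∑ μ, -(ψb m n Ψ σ μ w * ayb m n A μ a w
          * (aqyb m n A b σ c w - aqyb m n A c σ b w)))
      + ((∑ σ, ∑ μ, ∑ τ, ∑ ρ, -(ψb m n Ψ σ μ w * ayb m n A μ a w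
            * (dψb m n Ψ σ τ ρ w * ayb m n A τ b w * ayb m n A ρ c w)))
        + (∑ σ, ∑ μ, ∑ τ, ∑ ρ, -(ψb m n Ψ σ μ w * ayb m n A μ a w
            * (ψb m n Ψ τ ρ w * ayyb m n A σ τ b w * ayb m n A ρ c w)))
        + (∑ σ, ∑ μ, ∑ τ, ∑ ρ, -(ψb m n Ψ σ μ w * ayb m n A μ a w
            * (ψb m n Ψ τ ρ w * ayb m n A τ b w * ayyb m n A σ ρ c w)))) := by
  have step : ∀ σ, Bfb m n Ψ A a σ w * Dd (uyv m n σ) (Ffb m n Ψ A b c) w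
      = (∑ μ, -(ψb m n Ψ σ μ w * ayb m n A μ a w
            * (aqyb m n A b σ c w - aqyb m n A c σ b w)))
        + ((∑ μ, ∑ τ, ∑ ρ, -(ψb m n Ψ σ μ w * ayb m n A μ a w
              * (dψb m n Ψ σ τ ρ w * ayb m n A τ b w * ayb m n A ρ c w)))
          + (∑ μ, ∑ τ, ∑ ρ, -(ψb m n Ψ σ μ w * ayb m n A μ a w
              * (ψb m n Ψ τ ρ w * ayyb m n A σ τ b w * ayb m n A ρ c w)))
          + (∑ μ, ∑ τ, ∑ ρ, -(ψb m n Ψ σ μ w * ayb m n A μ a w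
              * (ψb m n Ψ τ ρ w * ayb m n A τ b w * ayyb m n A σ ρ c w)))) := by
    intro σ
    rw [DFf_y m n Ψ A hΨs hA σ b c w]
    show (-(∑ μ, ψb m n Ψ σ μ w * ayb m n A μ a w)) * _ = _
    rw [neg_mul, Finset.sum_mul, ← Finset.sum_neg_distrib]
    have hmuS : ∀ μ, -((ψb m n Ψ σ μ w * ayb m n A μ a w)
        * ∑ τ, ∑ ρ, (dψb m n Ψ σ τ ρ w * ayb m n A τ b w * ayb m n A ρ c w
          + ψb m n Ψ τ ρ w * ayyb m n A σ τ b w * ayb m n A ρ c w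
          + ψb m n Ψ τ ρ w * ayb m n A τ b w * ayyb m n A σ ρ c w))
        = ∑ τ, ∑ ρ, (-(ψb m n Ψ σ μ w * ayb m n A μ a w
            * (dψb m n Ψ σ τ ρ w * ayb m n A τ b w * ayb m n A ρ c w))
          + -(ψb m n Ψ σ μ w * ayb m n A μ a w
            * (ψb m n Ψ τ ρ w * ayyb m n A σ τ b w * ayb m n A ρ c w))
          + -(ψb m n Ψ σ μ w * ayb m n A μ a w
            * (ψb m n Ψ τ ρ w * ayb m n A τ b w * ayyb m n A σ ρ c w))) := by
      intro μ
      rw [Finset.mul_sum, ← Finset.sum_neg_distrib]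
      apply Finset.sum_congr rfl; intro τ _
      rw [Finset.mul_sum, ← Finset.sum_neg_distrib]
      apply Finset.sum_congr rfl; intro ρ _
      ring
    have hmu : ∀ μ, -(ψb m n Ψ σ μ w * ayb m n A μ a w
        * (aqyb m n A b σ c w - aqyb m n A c σ b w
          + ∑ τ, ∑ ρ, (dψb m n Ψ σ τ ρ w * ayb m n A τ b w * ayb m n A ρ c w
            + ψb m n Ψ τ ρ w * ayyb m n A σ τ b w * ayb m n A ρ c w
            + ψb m n Ψ τ ρ w * ayb m n A τ b w * ayyb m n A σ ρ c w)))
        = -(ψb m n Ψ σ μ w * ayb m n A μ a w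
            * (aqyb m n A b σ c w - aqyb m n A c σ b w))
          + ∑ τ, ∑ ρ, (-(ψb m n Ψ σ μ w * ayb m n A μ a w
              * (dψb m n Ψ σ τ ρ w * ayb m n A τ b w * ayb m n A ρ c w))
            + -(ψb m n Ψ σ μ w * ayb m n A μ a w
              * (ψb m n Ψ τ ρ w * ayyb m n A σ τ b w * ayb m n A ρ c w))
            + -(ψb m n Ψ σ μ w * ayb m n A μ a w
              * (ψb m n Ψ τ ρ w * ayb m n A τ b w * ayyb m n A σ ρ c w))) := by
      intro μ
      rw [← hmuS μ]
      ring
    rw [Finset.sum_congr rfl (fun μ _ => hmu μ)]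
    simp only [Finset.sum_add_distrib]
  rw [Finset.sum_congr rfl (fun σ _ => step σ)]
  simp only [Finset.sum_add_distrib]

end CasePPP
section CasePPP2
variable (m n : ℕ) (Ψ : Vec n → Fin n → Fin n → ℝ) (A : Vec m → Vec n → Fin m → ℝ)
variable (hΨs : ∀ α β, ContDiff ℝ (⊤ : ℕ∞) (fun y => Ψ y α β))
  (hΨsk : ∀ y α β, Ψ y α β = - Ψ y β α)
  (hΨj : ∀ f g h : Vec n → ℝ, ContDiff ℝ (⊤ : ℕ∞) f → ContDiff ℝ (⊤ : ℕ∞) g → ContDiff ℝ (⊤ : ℕ∞) h →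
      ∀ y, fibBracket n Ψ f (fibBracket n Ψ g h) y
          + fibBracket n Ψ g (fibBracket n Ψ h f) y
          + fibBracket n Ψ h (fibBracket n Ψ f g) y = 0)
  (hA : ∀ i, ContDiff ℝ (⊤ : ℕ∞) (fun qy : Vec m × Vec n => A qy.1 qy.2 i))

include hΨsk hA in
lemma pairAyy (a b c : Fin m) (w : Wsp m n) :
    (∑ σ, ∑ μ, ∑ τ, ∑ ρ, -(ψb m n Ψ σ μ w * ayb m n A μ a w
        * (ψb m n Ψ τ ρ w * ayb m n A τ b w * ayyb m n A σ ρ c w)))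
    + (∑ σ, ∑ μ, ∑ τ, ∑ ρ, -(ψb m n Ψ σ μ w * ayb m n A μ b w
        * (ψb m n Ψ τ ρ w * ayyb m n A σ τ c w * ayb m n A ρ a w))) = 0 := by
  rw [sum4_cyc3 (fun σ μ τ ρ => -(ψb m n Ψ σ μ w * ayb m n A μ b w
        * (ψb m n Ψ τ ρ w * ayyb m n A σ τ c w * ayb m n A ρ a w)))]
  have merge : (∑ σ, ∑ μ, ∑ τ, ∑ ρ, -(ψb m n Ψ σ μ w * ayb m n A μ a w
        * (ψb m n Ψ τ ρ w * ayb m n A τ b w * ayyb m n A σ ρ c w)))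
      + (∑ σ, ∑ μ, ∑ τ, ∑ ρ, -(ψb m n Ψ σ τ w * ayb m n A τ b w
        * (ψb m n Ψ ρ μ w * ayyb m n A σ ρ c w * ayb m n A μ a w)))
      = ∑ σ, ∑ μ, ∑ τ, ∑ ρ, ((-(ψb m n Ψ σ μ w * ψb m n Ψ τ ρ w)
          - ψb m n Ψ σ τ w * ψb m n Ψ ρ μ w)
          * (ayb m n A μ a w * ayb m n A τ b w)) * ayyb m n A σ ρ c w := by
    simp only [← Finset.sum_add_distrib]
    apply Finset.sum_congr rfl; intro σ _
    apply Finset.sum_congr rfl; intro μ _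
    apply Finset.sum_congr rfl; intro τ _
    apply Finset.sum_congr rfl; intro ρ _
    ring
  rw [merge, sum4_mid (fun σ μ τ ρ => ((-(ψb m n Ψ σ μ w * ψb m n Ψ τ ρ w)
      - ψb m n Ψ σ τ w * ψb m n Ψ ρ μ w)
      * (ayb m n A μ a w * ayb m n A τ b w)) * ayyb m n A σ ρ c w)]
  apply Finset.sum_eq_zero; intro μ _
  apply Finset.sum_eq_zero; intro τ _
  apply sum_antisym_symm
  · intro σ ρ
    rw [ψb_skew_pt m n Ψ hΨsk τ σ w, ψb_skew_pt m n Ψ hΨsk ρ τ w,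
      ψb_skew_pt m n Ψ hΨsk ρ μ w]
    ring
  · intro σ ρ; exact ayyb_symm m n A σ ρ c w hA

include hΨs hΨsk hΨj hA in
lemma dpsiGroup (i j k : Fin m) (w : Wsp m n) :
    (∑ σ, ∑ μ, ∑ τ, ∑ ρ, -(ψb m n Ψ σ μ w * ayb m n A μ i w
        * (dψb m n Ψ σ τ ρ w * ayb m n A τ j w * ayb m n A ρ k w)))
    + (∑ σ, ∑ μ, ∑ τ, ∑ ρ, -(ψb m n Ψ σ μ w * ayb m n A μ j w
        * (dψb m n Ψ σ τ ρ w * ayb m n A τ k w * ayb m n A ρ i w)))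
    + (∑ σ, ∑ μ, ∑ τ, ∑ ρ, -(ψb m n Ψ σ μ w * ayb m n A μ k w
        * (dψb m n Ψ σ τ ρ w * ayb m n A τ i w * ayb m n A ρ j w))) = 0 := by
  rw [sum4_cyc3 (fun σ μ τ ρ => -(ψb m n Ψ σ μ w * ayb m n A μ j w
        * (dψb m n Ψ σ τ ρ w * ayb m n A τ k w * ayb m n A ρ i w))),
    sum4_bl (fun σ μ τ ρ => -(ψb m n Ψ σ μ w * ayb m n A μ k w
        * (dψb m n Ψ σ τ ρ w * ayb m n A τ i w * ayb m n A ρ j w)))]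
  have merge : (∑ σ, ∑ μ, ∑ τ, ∑ ρ, -(ψb m n Ψ σ μ w * ayb m n A μ i w
        * (dψb m n Ψ σ τ ρ w * ayb m n A τ j w * ayb m n A ρ k w)))
      + (∑ σ, ∑ μ, ∑ τ, ∑ ρ, -(ψb m n Ψ σ τ w * ayb m n A τ j w
        * (dψb m n Ψ σ ρ μ w * ayb m n A ρ k w * ayb m n A μ i w)))
      + (∑ σ, ∑ μ, ∑ τ, ∑ ρ, -(ψb m n Ψ σ ρ w * ayb m n A ρ k w
        * (dψb m n Ψ σ μ τ w * ayb m n A μ i w * ayb m n A τ j w)))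
      = ∑ σ, ∑ μ, ∑ τ, ∑ ρ, (-(ψb m n Ψ σ μ w * dψb m n Ψ σ τ ρ w
          + ψb m n Ψ σ τ w * dψb m n Ψ σ ρ μ w
          + ψb m n Ψ σ ρ w * dψb m n Ψ σ μ τ w))
          * (ayb m n A μ i w * ayb m n A τ j w * ayb m n A ρ k w) := by
    simp only [← Finset.sum_add_distrib]
    apply Finset.sum_congr rfl; intro σ _
    apply Finset.sum_congr rfl; intro μ _
    apply Finset.sum_congr rfl; intro τ _
    apply Finset.sum_congr rfl; intro ρ _
    ring
  rw [merge, sum4_rot (fun σ μ τ ρ => (-(ψb m n Ψ σ μ w * dψb m n Ψ σ τ ρ w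
          + ψb m n Ψ σ τ w * dψb m n Ψ σ ρ μ w
          + ψb m n Ψ σ ρ w * dψb m n Ψ σ μ τ w))
          * (ayb m n A μ i w * ayb m n A τ j w * ayb m n A ρ k w))]
  apply Finset.sum_eq_zero; intro μ _
  apply Finset.sum_eq_zero; intro τ _
  apply Finset.sum_eq_zero; intro ρ _
  have hfac : ∑ σ, (-(ψb m n Ψ σ μ w * dψb m n Ψ σ τ ρ w
        + ψb m n Ψ σ τ w * dψb m n Ψ σ ρ μ w
        + ψb m n Ψ σ ρ w * dψb m n Ψ σ μ τ w))
        * (ayb m n A μ i w * ayb m n A τ j w * ayb m n A ρ k w)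
      = (ayb m n A μ i w * ayb m n A τ j w * ayb m n A ρ k w)
        * ∑ σ, (ψb m n Ψ μ σ w * dψb m n Ψ σ τ ρ w
          + ψb m n Ψ τ σ w * dψb m n Ψ σ ρ μ w
          + ψb m n Ψ ρ σ w * dψb m n Ψ σ μ τ w) := by
    rw [Finset.mul_sum]
    apply Finset.sum_congr rfl; intro σ _
    rw [ψb_skew_pt m n Ψ hΨsk σ μ w, ψb_skew_pt m n Ψ hΨsk σ τ w,
      ψb_skew_pt m n Ψ hΨsk σ ρ w]
    ring
  rw [hfac, psJW m n Ψ w μ τ ρ hΨs hΨj]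
  ring

include hΨsk in
lemma BCgroup (i j k : Fin m) (w : Wsp m n) :
    ((∑ α, ∑ β, (ψb m n Ψ α β w * aqyb m n A i α j w * ayb m n A β k w
        + ψb m n Ψ α β w * ayb m n A α j w * aqyb m n A i β k w))
      + (∑ α, ∑ β, (ψb m n Ψ α β w * aqyb m n A j α k w * ayb m n A β i w
        + ψb m n Ψ α β w * ayb m n A α k w * aqyb m n A j β i w))
      + (∑ α, ∑ β, (ψb m n Ψ α β w * aqyb m n A k α i w * ayb m n A β j w
        + ψb m n Ψ α β w * ayb m n A α i w * aqyb m n A k β j w)))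
    + ((∑ σ, ∑ μ, -(ψb m n Ψ σ μ w * ayb m n A μ i w
          * (aqyb m n A j σ k w - aqyb m n A k σ j w)))
      + (∑ σ, ∑ μ, -(ψb m n Ψ σ μ w * ayb m n A μ j w
          * (aqyb m n A k σ i w - aqyb m n A i σ k w)))
      + (∑ σ, ∑ μ, -(ψb m n Ψ σ μ w * ayb m n A μ k w
          * (aqyb m n A i σ j w - aqyb m n A j σ i w)))) = 0 := by
  have merge : ((∑ α, ∑ β, (ψb m n Ψ α β w * aqyb m n A i α j w * ayb m n A β k w
        + ψb m n Ψ α β w * ayb m n A α j w * aqyb m n A i β k w))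
      + (∑ α, ∑ β, (ψb m n Ψ α β w * aqyb m n A j α k w * ayb m n A β i w
        + ψb m n Ψ α β w * ayb m n A α k w * aqyb m n A j β i w))
      + (∑ α, ∑ β, (ψb m n Ψ α β w * aqyb m n A k α i w * ayb m n A β j w
        + ψb m n Ψ α β w * ayb m n A α i w * aqyb m n A k β j w)))
    + ((∑ σ, ∑ μ, -(ψb m n Ψ σ μ w * ayb m n A μ i w
          * (aqyb m n A j σ k w - aqyb m n A k σ j w)))
      + (∑ σ, ∑ μ, -(ψb m n Ψ σ μ w * ayb m n A μ j w
          * (aqyb m n A k σ i w - aqyb m n A i σ k w)))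
      + (∑ σ, ∑ μ, -(ψb m n Ψ σ μ w * ayb m n A μ k w
          * (aqyb m n A i σ j w - aqyb m n A j σ i w))))
      = ∑ α, ∑ β, ψb m n Ψ α β w
          * ((ayb m n A α j w * aqyb m n A i β k w
            + ayb m n A α k w * aqyb m n A j β i w
            + ayb m n A α i w * aqyb m n A k β j w)
          + (ayb m n A β j w * aqyb m n A i α k w
            + ayb m n A β k w * aqyb m n A j α i w
            + ayb m n A β i w * aqyb m n A k α j w)) := by
    simp only [← Finset.sum_add_distrib]
    apply Finset.sum_congr rfl; intro α _
    apply Finset.sum_congr rfl; intro β _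
    ring
  rw [merge]
  apply sum_antisym_symm
  · intro α β
    exact ψb_skew_pt m n Ψ hΨsk α β w
  · intro α β; ring

include hΨs hΨsk hΨj hA in
lemma casePPP (i j k : Fin m) (w : Wsp m n) :
    (Dd (uqv m n i) (Ffb m n Ψ A j k) w + Dd (uqv m n j) (Ffb m n Ψ A k i) w
      + Dd (uqv m n k) (Ffb m n Ψ A i j) w)
    + ∑ σ, (Bfb m n Ψ A i σ w * Dd (uyv m n σ) (Ffb m n Ψ A j k) w
        + Bfb m n Ψ A j σ w * Dd (uyv m n σ) (Ffb m n Ψ A k i) w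
        + Bfb m n Ψ A k σ w * Dd (uyv m n σ) (Ffb m n Ψ A i j) w) = 0 := by
  rw [DFf_q m n Ψ A hΨs hA i j k w, DFf_q m n Ψ A hΨs hA j k i w,
    DFf_q m n Ψ A hΨs hA k i j w]
  have hsplit : ∑ σ, (Bfb m n Ψ A i σ w * Dd (uyv m n σ) (Ffb m n Ψ A j k) w
        + Bfb m n Ψ A j σ w * Dd (uyv m n σ) (Ffb m n Ψ A k i) w
        + Bfb m n Ψ A k σ w * Dd (uyv m n σ) (Ffb m n Ψ A i j) w)
      = (∑ σ, Bfb m n Ψ A i σ w * Dd (uyv m n σ) (Ffb m n Ψ A j k) w)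
        + (∑ σ, Bfb m n Ψ A j σ w * Dd (uyv m n σ) (Ffb m n Ψ A k i) w)
        + (∑ σ, Bfb m n Ψ A k σ w * Dd (uyv m n σ) (Ffb m n Ψ A i j) w) := by
    simp only [Finset.sum_add_distrib]
  rw [hsplit, expandBfDFf m n Ψ A hΨs hA i j k w, expandBfDFf m n Ψ A hΨs hA j k i w,
    expandBfDFf m n Ψ A hΨs hA k i j w]
  have e1 := aqqb_symm m n A i j k w hA
  have e2 := aqqb_symm m n A i k j w hA
  have e3 := aqqb_symm m n A j k i w hA
  have hBC := BCgroup m n Ψ A hΨsk i j k w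
  have hD := dpsiGroup m n Ψ A hΨs hΨsk hΨj hA i j k w
  have hp1 := pairAyy m n Ψ A hΨsk hA i j k w
  have hp2 := pairAyy m n Ψ A hΨsk hA j k i w
  have hp3 := pairAyy m n Ψ A hΨsk hA k i j w
  linarith [e1, e2, e3, hBC, hD, hp1, hp2, hp3]

end CasePPP2
section Glue
variable (m n : ℕ) (Ψ : Vec n → Fin n → Fin n → ℝ) (A : Vec m → Vec n → Fin m → ℝ)

abbrev Idx (m n : ℕ) := Fin m ⊕ (Fin m ⊕ Fin n)

def ebT : Idx m n → ETot m n
  | .inl i => (Pi.single i 1, 0, 0)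
  | .inr (.inl i) => (0, Pi.single i 1, 0)
  | .inr (.inr α) => (0, 0, Pi.single α 1)

def PWb : Idx m n → Idx m n → Wsp m n → ℝ
  | .inl i, .inl j => Ffb m n Ψ A i j
  | .inl i, .inr (.inl j) => fun _ => if i = j then 1 else 0
  | .inl i, .inr (.inr α) => Bfb m n Ψ A i α
  | .inr (.inl i), .inl j => fun _ => -(if j = i then 1 else 0)
  | .inr (.inl _), .inr (.inl _) => fun _ => 0
  | .inr (.inl _), .inr (.inr _) => fun _ => 0
  | .inr (.inr α), .inl j => fun w => -(Bfb m n Ψ A j α w)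
  | .inr (.inr _), .inr (.inl _) => fun _ => 0
  | .inr (.inr α), .inr (.inr β) => ψb m n Ψ α β

def πvW : Idx m n → Wsp m n
  | .inl _ => 0
  | .inr (.inl j) => uqv m n j
  | .inr (.inr α) => uyv m n α

variable (hΨs : ∀ α β, ContDiff ℝ (⊤ : ℕ∞) (fun y => Ψ y α β))
  (hΨsk : ∀ y α β, Ψ y α β = - Ψ y β α)
  (hA : ∀ i, ContDiff ℝ (⊤ : ℕ∞) (fun qy : Vec m × Vec n => A qy.1 qy.2 i))

include hΨsk in
lemma Ffb_skew (i j : Fin m) (w : Wsp m n) :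
    Ffb m n Ψ A i j w = -Ffb m n Ψ A j i w := by
  unfold Ffb
  have key : ∑ α, ∑ β, ψb m n Ψ α β w * ayb m n A α i w * ayb m n A β j w
      = -∑ α, ∑ β, ψb m n Ψ α β w * ayb m n A α j w * ayb m n A β i w := by
    rw [Finset.sum_comm, ← Finset.sum_neg_distrib]
    apply Finset.sum_congr rfl; intro α _
    rw [← Finset.sum_neg_distrib]
    apply Finset.sum_congr rfl; intro β _
    rw [ψb_skew_pt m n Ψ hΨsk β α w]
    ring
  rw [key]; ring

include hΨsk in
lemma PWb_skew (a b : Idx m n) (w : Wsp m n) :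
    PWb m n Ψ A a b w = -PWb m n Ψ A b a w := by
  rcases a with i | i | α <;> rcases b with j | j | β <;>
    simp only [PWb, neg_neg, neg_zero]
  · exact Ffb_skew m n Ψ A hΨsk i j w
  · exact (ψb_skew_pt m n Ψ hΨsk α β w)

include hΨs hA in
lemma smooth_PWb (a b : Idx m n) : ContDiff ℝ (⊤ : ℕ∞) (PWb m n Ψ A a b) := by
  rcases a with i | i | α <;> rcases b with j | j | β <;> simp only [PWb]
  · exact smooth_Ffb m n Ψ A i j hΨs hA
  · exact contDiff_const
  · exact smooth_Bfb m n Ψ A i β hΨs hA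
  · exact contDiff_const
  · exact contDiff_const
  · exact contDiff_const
  · exact (smooth_Bfb m n Ψ A j α hΨs hA).neg
  · exact contDiff_const
  · exact smooth_ψb m n Ψ α β hΨs

def JW (a c d : Idx m n) (w : Wsp m n) : ℝ :=
  (∑ l, (PWb m n Ψ A a (.inr (.inl l)) w * Dd (uqv m n l) (PWb m n Ψ A c d) w
     + PWb m n Ψ A c (.inr (.inl l)) w * Dd (uqv m n l) (PWb m n Ψ A d a) w
     + PWb m n Ψ A d (.inr (.inl l)) w * Dd (uqv m n l) (PWb m n Ψ A a c) w))
  + (∑ σ, (PWb m n Ψ A a (.inr (.inr σ)) w * Dd (uyv m n σ) (PWb m n Ψ A c d) w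
     + PWb m n Ψ A c (.inr (.inr σ)) w * Dd (uyv m n σ) (PWb m n Ψ A d a) w
     + PWb m n Ψ A d (.inr (.inr σ)) w * Dd (uyv m n σ) (PWb m n Ψ A a c) w))

lemma JW_cyc (a c d : Idx m n) (w : Wsp m n) :
    JW m n Ψ A a c d w = JW m n Ψ A c d a w := by
  unfold JW
  congr 1
  · apply Finset.sum_congr rfl; intro l _; ring
  · apply Finset.sum_congr rfl; intro σ _; ring

include hΨsk in
lemma DPW_skew (v : Wsp m n) (c d : Idx m n) (w : Wsp m n) :
    Dd v (PWb m n Ψ A c d) w = -Dd v (PWb m n Ψ A d c) w := by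
  rw [show PWb m n Ψ A c d = (fun w => -PWb m n Ψ A d c w) from
    funext (fun w => PWb_skew m n Ψ A hΨsk c d w), Dd_neg]

include hΨsk in
lemma JW_swap (a c d : Idx m n) (w : Wsp m n) :
    JW m n Ψ A a c d w = -JW m n Ψ A a d c w := by
  unfold JW
  rw [neg_add, ← Finset.sum_neg_distrib, ← Finset.sum_neg_distrib]
  congr 1
  · apply Finset.sum_congr rfl; intro l _
    rw [DPW_skew m n Ψ A hΨsk (uqv m n l) c d w,
      DPW_skew m n Ψ A hΨsk (uqv m n l) a c w,
      DPW_skew m n Ψ A hΨsk (uqv m n l) d a w]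
    ring
  · apply Finset.sum_congr rfl; intro σ _
    rw [DPW_skew m n Ψ A hΨsk (uyv m n σ) c d w,
      DPW_skew m n Ψ A hΨsk (uyv m n σ) a c w,
      DPW_skew m n Ψ A hΨsk (uyv m n σ) d a w]
    ring

end Glue
section Dispatch
variable (m n : ℕ) (Ψ : Vec n → Fin n → Fin n → ℝ) (A : Vec m → Vec n → Fin m → ℝ)
variable (hΨs : ∀ α β, ContDiff ℝ (⊤ : ℕ∞) (fun y => Ψ y α β))
  (hΨsk : ∀ y α β, Ψ y α β = - Ψ y β α)
  (hΨj : ∀ f g h : Vec n → ℝ, ContDiff ℝ (⊤ : ℕ∞) f → ContDiff ℝ (⊤ : ℕ∞) g → ContDiff ℝ (⊤ : ℕ∞) h →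
      ∀ y, fibBracket n Ψ f (fibBracket n Ψ g h) y
          + fibBracket n Ψ g (fibBracket n Ψ h f) y
          + fibBracket n Ψ h (fibBracket n Ψ f g) y = 0)
  (hA : ∀ i, ContDiff ℝ (⊤ : ℕ∞) (fun qy : Vec m × Vec n => A qy.1 qy.2 i))

-- trivial cases
lemma jQQQ (i j k : Fin m) (w : Wsp m n) :
    JW m n Ψ A (.inr (.inl i)) (.inr (.inl j)) (.inr (.inl k)) w = 0 := by
  unfold JW; simp [PWb, Dd_const]

lemma jQQY (i j : Fin m) (α : Fin n) (w : Wsp m n) :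
    JW m n Ψ A (.inr (.inl i)) (.inr (.inl j)) (.inr (.inr α)) w = 0 := by
  unfold JW; simp [PWb, Dd_const]

lemma jQYY (i : Fin m) (α β : Fin n) (w : Wsp m n) :
    JW m n Ψ A (.inr (.inl i)) (.inr (.inr α)) (.inr (.inr β)) w = 0 := by
  unfold JW; simp [PWb, Dd_const]

lemma jPQQ (i j k : Fin m) (w : Wsp m n) :
    JW m n Ψ A (.inl i) (.inr (.inl j)) (.inr (.inl k)) w = 0 := by
  unfold JW; simp [PWb, Dd_const]

lemma jPQY (i j : Fin m) (α : Fin n) (w : Wsp m n) :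
    JW m n Ψ A (.inl i) (.inr (.inl j)) (.inr (.inr α)) w = 0 := by
  unfold JW; simp [PWb, Dd_const]

lemma jPPQ (i j k : Fin m) (w : Wsp m n) :
    JW m n Ψ A (.inl i) (.inl j) (.inr (.inl k)) w = 0 := by
  unfold JW; simp [PWb, Dd_const]

include hΨs hΨj in
lemma jYYY (α β γ : Fin n) (w : Wsp m n) :
    JW m n Ψ A (.inr (.inr α)) (.inr (.inr β)) (.inr (.inr γ)) w = 0 := by
  unfold JW
  have hQ : (∑ l, (PWb m n Ψ A (.inr (.inr α)) (.inr (.inl l)) w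
        * Dd (uqv m n l) (PWb m n Ψ A (.inr (.inr β)) (.inr (.inr γ))) w
      + PWb m n Ψ A (.inr (.inr β)) (.inr (.inl l)) w
        * Dd (uqv m n l) (PWb m n Ψ A (.inr (.inr γ)) (.inr (.inr α))) w
      + PWb m n Ψ A (.inr (.inr γ)) (.inr (.inl l)) w
        * Dd (uqv m n l) (PWb m n Ψ A (.inr (.inr α)) (.inr (.inr β))) w)) = 0 := by
    apply Finset.sum_eq_zero; intro l _
    simp only [PWb]; ring
  rw [hQ, zero_add]
  exact psJW m n Ψ w α β γ hΨs hΨj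

include hΨs hΨsk hΨj hA in
lemma jPYY (i : Fin m) (α β : Fin n) (w : Wsp m n) :
    JW m n Ψ A (.inl i) (.inr (.inr α)) (.inr (.inr β)) w = 0 := by
  unfold JW
  have hQ : (∑ l, (PWb m n Ψ A (.inl i) (.inr (.inl l)) w
        * Dd (uqv m n l) (PWb m n Ψ A (.inr (.inr α)) (.inr (.inr β))) w
      + PWb m n Ψ A (.inr (.inr α)) (.inr (.inl l)) w
        * Dd (uqv m n l) (PWb m n Ψ A (.inr (.inr β)) (.inl i)) w
      + PWb m n Ψ A (.inr (.inr β)) (.inr (.inl l)) w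
        * Dd (uqv m n l) (PWb m n Ψ A (.inl i) (.inr (.inr α))) w)) = 0 := by
    apply Finset.sum_eq_zero; intro l _
    simp only [PWb]
    rw [Dq_ψb m n Ψ l α β w hΨs]
    ring
  have hY : (∑ σ, (PWb m n Ψ A (.inl i) (.inr (.inr σ)) w
        * Dd (uyv m n σ) (PWb m n Ψ A (.inr (.inr α)) (.inr (.inr β))) w
      + PWb m n Ψ A (.inr (.inr α)) (.inr (.inr σ)) w
        * Dd (uyv m n σ) (PWb m n Ψ A (.inr (.inr β)) (.inl i)) w
      + PWb m n Ψ A (.inr (.inr β)) (.inr (.inr σ)) w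
        * Dd (uyv m n σ) (PWb m n Ψ A (.inl i) (.inr (.inr α))) w))
      = ∑ σ, (Bfb m n Ψ A i σ w * dψb m n Ψ σ α β w
        - ψb m n Ψ α σ w * Dd (uyv m n σ) (Bfb m n Ψ A i β) w
        + ψb m n Ψ β σ w * Dd (uyv m n σ) (Bfb m n Ψ A i α) w) := by
    apply Finset.sum_congr rfl; intro σ _
    simp only [PWb]
    rw [Dd_neg]
    show Bfb m n Ψ A i σ w * dψb m n Ψ σ α β w
        + ψb m n Ψ α σ w * -Dd (uyv m n σ) (Bfb m n Ψ A i β) w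
        + ψb m n Ψ β σ w * Dd (uyv m n σ) (Bfb m n Ψ A i α) w
      = Bfb m n Ψ A i σ w * dψb m n Ψ σ α β w
        - ψb m n Ψ α σ w * Dd (uyv m n σ) (Bfb m n Ψ A i β) w
        + ψb m n Ψ β σ w * Dd (uyv m n σ) (Bfb m n Ψ A i α) w
    ring
  rw [hQ, hY, zero_add]
  exact casePYY m n Ψ A hΨs hΨsk hΨj hA i α β w

include hΨs hΨsk hΨj hA in
lemma jPPY (i j : Fin m) (α : Fin n) (w : Wsp m n) :
    JW m n Ψ A (.inl i) (.inl j) (.inr (.inr α)) w = 0 := by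
  unfold JW
  have hQ : (∑ l, (PWb m n Ψ A (.inl i) (.inr (.inl l)) w
        * Dd (uqv m n l) (PWb m n Ψ A (.inl j) (.inr (.inr α))) w
      + PWb m n Ψ A (.inl j) (.inr (.inl l)) w
        * Dd (uqv m n l) (PWb m n Ψ A (.inr (.inr α)) (.inl i)) w
      + PWb m n Ψ A (.inr (.inr α)) (.inr (.inl l)) w
        * Dd (uqv m n l) (PWb m n Ψ A (.inl i) (.inl j)) w))
      = Dd (uqv m n i) (Bfb m n Ψ A j α) w - Dd (uqv m n j) (Bfb m n Ψ A i α) w := by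
    have hterm : ∀ l, (PWb m n Ψ A (.inl i) (.inr (.inl l)) w
        * Dd (uqv m n l) (PWb m n Ψ A (.inl j) (.inr (.inr α))) w
      + PWb m n Ψ A (.inl j) (.inr (.inl l)) w
        * Dd (uqv m n l) (PWb m n Ψ A (.inr (.inr α)) (.inl i)) w
      + PWb m n Ψ A (.inr (.inr α)) (.inr (.inl l)) w
        * Dd (uqv m n l) (PWb m n Ψ A (.inl i) (.inl j)) w)
        = (if i = l then 1 else 0) * Dd (uqv m n l) (Bfb m n Ψ A j α) w
          - (if j = l then 1 else 0) * Dd (uqv m n l) (Bfb m n Ψ A i α) w := by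
      intro l
      simp only [PWb]
      rw [Dd_neg]
      ring
    rw [Finset.sum_congr rfl (fun l _ => hterm l), Finset.sum_sub_distrib]
    congr 1 <;> simp [Finset.sum_ite_eq, ite_mul, one_mul, zero_mul]
  have hY : (∑ σ, (PWb m n Ψ A (.inl i) (.inr (.inr σ)) w
        * Dd (uyv m n σ) (PWb m n Ψ A (.inl j) (.inr (.inr α))) w
      + PWb m n Ψ A (.inl j) (.inr (.inr σ)) w
        * Dd (uyv m n σ) (PWb m n Ψ A (.inr (.inr α)) (.inl i)) w
      + PWb m n Ψ A (.inr (.inr α)) (.inr (.inr σ)) w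
        * Dd (uyv m n σ) (PWb m n Ψ A (.inl i) (.inl j)) w))
      = ∑ σ, (Bfb m n Ψ A i σ w * Dd (uyv m n σ) (Bfb m n Ψ A j α) w
        - Bfb m n Ψ A j σ w * Dd (uyv m n σ) (Bfb m n Ψ A i α) w
        + ψb m n Ψ α σ w * Dd (uyv m n σ) (Ffb m n Ψ A i j) w) := by
    apply Finset.sum_congr rfl; intro σ _
    simp only [PWb]
    rw [Dd_neg]
    ring
  rw [hQ, hY]
  exact casePPY m n Ψ A hΨs hΨsk hΨj hA i j α w

include hΨs hΨsk hΨj hA in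
lemma jPPP (i j k : Fin m) (w : Wsp m n) :
    JW m n Ψ A (.inl i) (.inl j) (.inl k) w = 0 := by
  unfold JW
  have hQ : (∑ l, (PWb m n Ψ A (.inl i) (.inr (.inl l)) w
        * Dd (uqv m n l) (PWb m n Ψ A (.inl j) (.inl k)) w
      + PWb m n Ψ A (.inl j) (.inr (.inl l)) w
        * Dd (uqv m n l) (PWb m n Ψ A (.inl k) (.inl i)) w
      + PWb m n Ψ A (.inl k) (.inr (.inl l)) w
        * Dd (uqv m n l) (PWb m n Ψ A (.inl i) (.inl j)) w))
      = Dd (uqv m n i) (Ffb m n Ψ A j k) w + Dd (uqv m n j) (Ffb m n Ψ A k i) w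
        + Dd (uqv m n k) (Ffb m n Ψ A i j) w := by
    have hterm : ∀ l, (PWb m n Ψ A (.inl i) (.inr (.inl l)) w
        * Dd (uqv m n l) (PWb m n Ψ A (.inl j) (.inl k)) w
      + PWb m n Ψ A (.inl j) (.inr (.inl l)) w
        * Dd (uqv m n l) (PWb m n Ψ A (.inl k) (.inl i)) w
      + PWb m n Ψ A (.inl k) (.inr (.inl l)) w
        * Dd (uqv m n l) (PWb m n Ψ A (.inl i) (.inl j)) w)
        = (if i = l then 1 else 0) * Dd (uqv m n l) (Ffb m n Ψ A j k) w
          + ((if j = l then 1 else 0) * Dd (uqv m n l) (Ffb m n Ψ A k i) w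
          + (if k = l then 1 else 0) * Dd (uqv m n l) (Ffb m n Ψ A i j) w) := by
      intro l
      simp only [PWb]
      ring
    rw [Finset.sum_congr rfl (fun l _ => hterm l), Finset.sum_add_distrib,
      Finset.sum_add_distrib]
    have e1 : ∑ l, (if i = l then (1:ℝ) else 0) * Dd (uqv m n l) (Ffb m n Ψ A j k) w
        = Dd (uqv m n i) (Ffb m n Ψ A j k) w := by simp [Finset.sum_ite_eq, ite_mul, one_mul, zero_mul]
    have e2 : ∑ l, (if j = l then (1:ℝ) else 0) * Dd (uqv m n l) (Ffb m n Ψ A k i) w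
        = Dd (uqv m n j) (Ffb m n Ψ A k i) w := by simp [Finset.sum_ite_eq, ite_mul, one_mul, zero_mul]
    have e3 : ∑ l, (if k = l then (1:ℝ) else 0) * Dd (uqv m n l) (Ffb m n Ψ A i j) w
        = Dd (uqv m n k) (Ffb m n Ψ A i j) w := by simp [Finset.sum_ite_eq, ite_mul, one_mul, zero_mul]
    rw [e1, e2, e3]; ring
  have hY : (∑ σ, (PWb m n Ψ A (.inl i) (.inr (.inr σ)) w
        * Dd (uyv m n σ) (PWb m n Ψ A (.inl j) (.inl k)) w
      + PWb m n Ψ A (.inl j) (.inr (.inr σ)) w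
        * Dd (uyv m n σ) (PWb m n Ψ A (.inl k) (.inl i)) w
      + PWb m n Ψ A (.inl k) (.inr (.inr σ)) w
        * Dd (uyv m n σ) (PWb m n Ψ A (.inl i) (.inl j)) w))
      = ∑ σ, (Bfb m n Ψ A i σ w * Dd (uyv m n σ) (Ffb m n Ψ A j k) w
        + Bfb m n Ψ A j σ w * Dd (uyv m n σ) (Ffb m n Ψ A k i) w
        + Bfb m n Ψ A k σ w * Dd (uyv m n σ) (Ffb m n Ψ A i j) w) := by
    apply Finset.sum_congr rfl; intro σ _
    simp only [PWb]
  rw [hQ, hY]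
  exact casePPP m n Ψ A hΨs hΨsk hΨj hA i j k w

include hΨs hΨsk hΨj hA in
lemma hJW : ∀ (a c d : Idx m n) (w : Wsp m n), JW m n Ψ A a c d w = 0 := by
  intro a c d w
  rcases a with i | i | α <;> rcases c with j | j | β <;> rcases d with k | k | γ
  · exact jPPP m n Ψ A hΨs hΨsk hΨj hA i j k w
  · exact jPPQ m n Ψ A i j k w
  · exact jPPY m n Ψ A hΨs hΨsk hΨj hA i j γ w
  · rw [JW_cyc, JW_cyc]; exact jPPQ m n Ψ A k i j w
  · exact jPQQ m n Ψ A i j k w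
  · exact jPQY m n Ψ A i j γ w
  · rw [JW_cyc, JW_cyc]; exact jPPY m n Ψ A hΨs hΨsk hΨj hA k i β w
  · rw [JW_swap m n Ψ A hΨsk, jPQY m n Ψ A i k β w]; exact neg_zero
  · exact jPYY m n Ψ A hΨs hΨsk hΨj hA i β γ w
  · rw [JW_cyc]; exact jPPQ m n Ψ A j k i w
  · rw [JW_cyc]; exact jPQQ m n Ψ A j k i w
  · rw [JW_swap m n Ψ A hΨsk, JW_cyc, JW_cyc, jPQY m n Ψ A j i γ w]; exact neg_zero
  · rw [JW_cyc, JW_cyc]; exact jPQQ m n Ψ A k i j w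
  · exact jQQQ m n Ψ A i j k w
  · exact jQQY m n Ψ A i j γ w
  · rw [JW_cyc, JW_cyc]; exact jPQY m n Ψ A k i β w
  · rw [JW_cyc, JW_cyc]; exact jQQY m n Ψ A k i β w
  · exact jQYY m n Ψ A i β γ w
  · rw [JW_cyc]; exact jPPY m n Ψ A hΨs hΨsk hΨj hA j k α w
  · rw [JW_cyc]; exact jPQY m n Ψ A j k α w
  · rw [JW_cyc]; exact jPYY m n Ψ A hΨs hΨsk hΨj hA j γ α w
  · rw [JW_swap m n Ψ A hΨsk, JW_cyc, jPQY m n Ψ A k j α w]; exact neg_zero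
  · rw [JW_cyc]; exact jQQY m n Ψ A j k α w
  · rw [JW_cyc]; exact jQYY m n Ψ A j γ α w
  · rw [JW_cyc, JW_cyc]; exact jPYY m n Ψ A hΨs hΨsk hΨj hA k α β w
  · rw [JW_cyc, JW_cyc]; exact jQYY m n Ψ A k α β w
  · exact jYYY m n Ψ A hΨs hΨj α β γ w
end Dispatch
section Conv
variable (m n : ℕ) (Ψ : Vec n → Fin n → Fin n → ℝ) (A : Vec m → Vec n → Fin m → ℝ)
variable (hA : ∀ i, ContDiff ℝ (⊤ : ℕ∞) (fun qy : Vec m × Vec n => A qy.1 qy.2 i))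

include hA in
lemma dqA_eq (j i : Fin m) (q : Vec m) (y : Vec n) :
    dqA m n A j i q y = aqb m n A j i (q, y) := by
  have hf : HasFDerivAt (fun q' : Vec m => (q', y))
      (ContinuousLinearMap.inl ℝ (Vec m) (Vec n)) q := hasFDerivAt_prodMk_left q y
  have hg : DifferentiableAt ℝ (Afn m n A i) (q, y) := dAt (hA i) (q, y)
  show (fderiv ℝ ((Afn m n A i) ∘ fun q' : Vec m => (q', y)) q) (Pi.single j 1) = _
  rw [fderiv_comp q hg hf.differentiableAt, hf.fderiv]
  rfl

include hA in
lemma dyA_eq (α : Fin n) (i : Fin m) (q : Vec m) (y : Vec n) :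
    dyA m n A α i q y = ayb m n A α i (q, y) := by
  have hf : HasFDerivAt (fun y' : Vec n => (q, y'))
      (ContinuousLinearMap.inr ℝ (Vec m) (Vec n)) y := hasFDerivAt_prodMk_right q y
  have hg : DifferentiableAt ℝ (Afn m n A i) (q, y) := dAt (hA i) (q, y)
  show (fderiv ℝ ((Afn m n A i) ∘ fun y' : Vec n => (q, y')) y) (Pi.single α 1) = _
  rw [fderiv_comp y hg hf.differentiableAt, hf.fderiv]
  rfl

include hA in
lemma curvF_eq (i j : Fin m) (q : Vec m) (y : Vec n) :
    curvF m n Ψ A i j q y = Ffb m n Ψ A i j (q, y) := by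
  unfold curvF Ffb
  rw [dqA_eq m n A hA i j q y, dqA_eq m n A hA j i q y]
  congr 1
  apply Finset.sum_congr rfl; intro α _
  apply Finset.sum_congr rfl; intro β _
  rw [dyA_eq m n A hA α i q y, dyA_eq m n A hA β j q y]
  rfl

include hA in
lemma Bfb_eq (i : Fin m) (α : Fin n) (q : Vec m) (y : Vec n) :
    -(∑ β, Ψ y α β * dyA m n A β i q y) = Bfb m n Ψ A i α (q, y) := by
  unfold Bfb
  congr 1
  apply Finset.sum_congr rfl; intro β _
  rw [dyA_eq m n A hA β i q y]
  rfl

end Conv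
section Final
variable (m n : ℕ) (Ψ : Vec n → Fin n → Fin n → ℝ) (A : Vec m → Vec n → Fin m → ℝ)
variable (hΨs : ∀ α β, ContDiff ℝ (⊤ : ℕ∞) (fun y => Ψ y α β))
  (hΨsk : ∀ y α β, Ψ y α β = - Ψ y β α)
  (hΨj : ∀ f g h : Vec n → ℝ, ContDiff ℝ (⊤ : ℕ∞) f → ContDiff ℝ (⊤ : ℕ∞) g → ContDiff ℝ (⊤ : ℕ∞) h →
      ∀ y, fibBracket n Ψ f (fibBracket n Ψ g h) y
          + fibBracket n Ψ g (fibBracket n Ψ h f) y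
          + fibBracket n Ψ h (fibBracket n Ψ f g) y = 0)
  (hA : ∀ i, ContDiff ℝ (⊤ : ℕ∞) (fun qy : Vec m × Vec n => A qy.1 qy.2 i))

include hΨs hA in
lemma Dd_Pf (b c d : Idx m n) (x : ETot m n) :
    Dd (ebT m n b) (fun x' : ETot m n => PWb m n Ψ A c d x'.2) x
      = Dd (πvW m n b) (PWb m n Ψ A c d) x.2 := by
  have h := Dd_clm_comp (ebT m n b) (ContinuousLinearMap.snd ℝ (Vec m) (Wsp m n))
    (G := PWb m n Ψ A c d) (x := x)
    (dAt (smooth_PWb m n Ψ A hΨs hA c d) x.2)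
  rw [show (fun x' : ETot m n => PWb m n Ψ A c d x'.2)
      = (fun x' : ETot m n => PWb m n Ψ A c d
        ((ContinuousLinearMap.snd ℝ (Vec m) (Wsp m n)) x')) from rfl, h]
  rcases b with i | i | α <;> rfl

include hΨs hΨsk hΨj hA in
lemma hjacE (x : ETot m n) (a c d : Idx m n) :
    ∑ b, (PWb m n Ψ A a b x.2
          * Dd (ebT m n b) (fun x' : ETot m n => PWb m n Ψ A c d x'.2) x
      + PWb m n Ψ A c b x.2
          * Dd (ebT m n b) (fun x' : ETot m n => PWb m n Ψ A d a x'.2) x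
      + PWb m n Ψ A d b x.2
          * Dd (ebT m n b) (fun x' : ETot m n => PWb m n Ψ A a c x'.2) x) = 0 := by
  have hterm : ∀ b, (PWb m n Ψ A a b x.2
          * Dd (ebT m n b) (fun x' : ETot m n => PWb m n Ψ A c d x'.2) x
      + PWb m n Ψ A c b x.2
          * Dd (ebT m n b) (fun x' : ETot m n => PWb m n Ψ A d a x'.2) x
      + PWb m n Ψ A d b x.2
          * Dd (ebT m n b) (fun x' : ETot m n => PWb m n Ψ A a c x'.2) x)
      = (PWb m n Ψ A a b x.2 * Dd (πvW m n b) (PWb m n Ψ A c d) x.2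
        + PWb m n Ψ A c b x.2 * Dd (πvW m n b) (PWb m n Ψ A d a) x.2
        + PWb m n Ψ A d b x.2 * Dd (πvW m n b) (PWb m n Ψ A a c) x.2) := by
    intro b
    rw [Dd_Pf m n Ψ A hΨs hA b c d x, Dd_Pf m n Ψ A hΨs hA b d a x,
      Dd_Pf m n Ψ A hΨs hA b a c x]
  rw [Finset.sum_congr rfl (fun b _ => hterm b), Fintype.sum_sum_type,
    Fintype.sum_sum_type]
  have h0 : ∑ l : Fin m, (PWb m n Ψ A a (Sum.inl l) x.2
        * Dd (πvW m n (Sum.inl l)) (PWb m n Ψ A c d) x.2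
      + PWb m n Ψ A c (Sum.inl l) x.2
        * Dd (πvW m n (Sum.inl l)) (PWb m n Ψ A d a) x.2
      + PWb m n Ψ A d (Sum.inl l) x.2
        * Dd (πvW m n (Sum.inl l)) (PWb m n Ψ A a c) x.2) = 0 := by
    apply Finset.sum_eq_zero; intro l _
    have hz : ∀ u v : Idx m n,
        Dd (πvW m n (Sum.inl l)) (PWb m n Ψ A u v) x.2 = 0 := fun u v => Dd_zero _ _
    rw [hz c d, hz d a, hz a c]
    ring
  rw [h0, zero_add]
  exact hJW m n Ψ A hΨs hΨsk hΨj hA a c d x.2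

end Final
section GB
variable (m n : ℕ) (Ψ : Vec n → Fin n → Fin n → ℝ) (A : Vec m → Vec n → Fin m → ℝ)
variable (hΨs : ∀ α β, ContDiff ℝ (⊤ : ℕ∞) (fun y => Ψ y α β))
  (hΨsk : ∀ y α β, Ψ y α β = - Ψ y β α)
  (hΨj : ∀ f g h : Vec n → ℝ, ContDiff ℝ (⊤ : ℕ∞) f → ContDiff ℝ (⊤ : ℕ∞) g → ContDiff ℝ (⊤ : ℕ∞) h →
      ∀ y, fibBracket n Ψ f (fibBracket n Ψ g h) y
          + fibBracket n Ψ g (fibBracket n Ψ h f) y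
          + fibBracket n Ψ h (fibBracket n Ψ f g) y = 0)
  (hA : ∀ i, ContDiff ℝ (⊤ : ℕ∞) (fun qy : Vec m × Vec n => A qy.1 qy.2 i))

include hA in
lemma gb_eq (f g : ETot m n → ℝ) (x : ETot m n) :
    gaugeBracket m n Ψ A f g x
      = Br (ebT m n) (fun a b x' => PWb m n Ψ A a b x'.2) f g x := by
  have hBr : Br (ebT m n) (fun a b x' => PWb m n Ψ A a b x'.2) f g x
      = (∑ i, ∑ j, PWb m n Ψ A (.inl i) (.inl j) x.2
          * Dd (ebT m n (.inl i)) f x * Dd (ebT m n (.inl j)) g x)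
        + (∑ i, ∑ j, PWb m n Ψ A (.inl i) (.inr (.inl j)) x.2
          * Dd (ebT m n (.inl i)) f x * Dd (ebT m n (.inr (.inl j))) g x)
        + (∑ i, ∑ σ, PWb m n Ψ A (.inl i) (.inr (.inr σ)) x.2
          * Dd (ebT m n (.inl i)) f x * Dd (ebT m n (.inr (.inr σ))) g x)
        + (∑ i, ∑ j, PWb m n Ψ A (.inr (.inl i)) (.inl j) x.2
          * Dd (ebT m n (.inr (.inl i))) f x * Dd (ebT m n (.inl j)) g x)
        + (∑ i, ∑ j, PWb m n Ψ A (.inr (.inl i)) (.inr (.inl j)) x.2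
          * Dd (ebT m n (.inr (.inl i))) f x * Dd (ebT m n (.inr (.inl j))) g x)
        + (∑ i, ∑ σ, PWb m n Ψ A (.inr (.inl i)) (.inr (.inr σ)) x.2
          * Dd (ebT m n (.inr (.inl i))) f x * Dd (ebT m n (.inr (.inr σ))) g x)
        + (∑ α, ∑ j, PWb m n Ψ A (.inr (.inr α)) (.inl j) x.2
          * Dd (ebT m n (.inr (.inr α))) f x * Dd (ebT m n (.inl j)) g x)
        + (∑ α, ∑ j, PWb m n Ψ A (.inr (.inr α)) (.inr (.inl j)) x.2
          * Dd (ebT m n (.inr (.inr α))) f x * Dd (ebT m n (.inr (.inl j))) g x)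
        + (∑ α, ∑ β, PWb m n Ψ A (.inr (.inr α)) (.inr (.inr β)) x.2
          * Dd (ebT m n (.inr (.inr α))) f x * Dd (ebT m n (.inr (.inr β))) g x) := by
    unfold Br
    simp only [Fintype.sum_sum_type, Finset.sum_add_distrib]
    ring
  have bPP : (∑ i, ∑ j, PWb m n Ψ A (.inl i) (.inl j) x.2
        * Dd (ebT m n (.inl i)) f x * Dd (ebT m n (.inl j)) g x)
      = ∑ i, ∑ j, curvF m n Ψ A i j x.2.1 x.2.2 * dP m n f i x * dP m n g j x := by
    apply Finset.sum_congr rfl; intro i _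
    apply Finset.sum_congr rfl; intro j _
    rw [curvF_eq m n Ψ A hA i j x.2.1 x.2.2]
    rfl
  have bPQ : (∑ i, ∑ j, PWb m n Ψ A (.inl i) (.inr (.inl j)) x.2
        * Dd (ebT m n (.inl i)) f x * Dd (ebT m n (.inr (.inl j))) g x)
      = ∑ i, dP m n f i x * dQ m n g i x := by
    apply Finset.sum_congr rfl; intro i _
    simp only [PWb, ite_mul, one_mul, zero_mul, Finset.sum_ite_eq, Finset.mem_univ, if_true]
    rfl
  have bQP : (∑ i, ∑ j, PWb m n Ψ A (.inr (.inl i)) (.inl j) x.2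
        * Dd (ebT m n (.inr (.inl i))) f x * Dd (ebT m n (.inl j)) g x)
      = -∑ i, dQ m n f i x * dP m n g i x := by
    rw [← Finset.sum_neg_distrib]
    apply Finset.sum_congr rfl; intro i _
    simp only [PWb, neg_mul, ite_mul, one_mul, zero_mul, neg_zero, Finset.sum_neg_distrib,
      Finset.sum_ite_eq', Finset.mem_univ, if_true]
    rfl
  have bQQ : (∑ i, ∑ j, PWb m n Ψ A (.inr (.inl i)) (.inr (.inl j)) x.2
        * Dd (ebT m n (.inr (.inl i))) f x * Dd (ebT m n (.inr (.inl j))) g x) = 0 := by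
    simp [PWb]
  have bQY : (∑ i, ∑ σ, PWb m n Ψ A (.inr (.inl i)) (.inr (.inr σ)) x.2
        * Dd (ebT m n (.inr (.inl i))) f x * Dd (ebT m n (.inr (.inr σ))) g x) = 0 := by
    simp [PWb]
  have bYQ : (∑ α, ∑ j, PWb m n Ψ A (.inr (.inr α)) (.inr (.inl j)) x.2
        * Dd (ebT m n (.inr (.inr α))) f x * Dd (ebT m n (.inr (.inl j))) g x) = 0 := by
    simp [PWb]
  have bPY : (∑ i, ∑ σ, PWb m n Ψ A (.inl i) (.inr (.inr σ)) x.2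
        * Dd (ebT m n (.inl i)) f x * Dd (ebT m n (.inr (.inr σ))) g x)
      = ∑ i, ∑ α, (-(∑ β, Ψ x.2.2 α β * dyA m n A β i x.2.1 x.2.2))
          * (dP m n f i x * dYE m n g α x) := by
    apply Finset.sum_congr rfl; intro i _
    apply Finset.sum_congr rfl; intro α _
    rw [Bfb_eq m n Ψ A hA i α x.2.1 x.2.2]
    show Bfb m n Ψ A i α x.2 * Dd (ebT m n (.inl i)) f x * Dd (ebT m n (.inr (.inr α))) g x
      = Bfb m n Ψ A i α x.2 * (dP m n f i x * dYE m n g α x)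
    show Bfb m n Ψ A i α x.2 * dP m n f i x * dYE m n g α x
      = Bfb m n Ψ A i α x.2 * (dP m n f i x * dYE m n g α x)
    ring
  have bYP : (∑ α, ∑ j, PWb m n Ψ A (.inr (.inr α)) (.inl j) x.2
        * Dd (ebT m n (.inr (.inr α))) f x * Dd (ebT m n (.inl j)) g x)
      = -∑ i, ∑ α, (-(∑ β, Ψ x.2.2 α β * dyA m n A β i x.2.1 x.2.2))
          * (dYE m n f α x * dP m n g i x) := by
    rw [Finset.sum_comm, ← Finset.sum_neg_distrib]
    apply Finset.sum_congr rfl; intro i _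
    rw [← Finset.sum_neg_distrib]
    apply Finset.sum_congr rfl; intro α _
    rw [Bfb_eq m n Ψ A hA i α x.2.1 x.2.2]
    show -Bfb m n Ψ A i α x.2 * dYE m n f α x * dP m n g i x
      = -(Bfb m n Ψ A i α x.2 * (dYE m n f α x * dP m n g i x))
    ring
  have bYY : (∑ α, ∑ β, PWb m n Ψ A (.inr (.inr α)) (.inr (.inr β)) x.2
        * Dd (ebT m n (.inr (.inr α))) f x * Dd (ebT m n (.inr (.inr β))) g x)
      = ∑ α, ∑ β, Ψ x.2.2 α β * dYE m n f α x * dYE m n g β x := by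
    apply Finset.sum_congr rfl; intro α _
    apply Finset.sum_congr rfl; intro β _
    rfl
  rw [hBr, bPP, bPQ, bQP, bQQ, bQY, bYQ, bPY, bYP, bYY]
  unfold gaugeBracket
  have e2 : ∑ i, (dP m n f i x * dQ m n g i x - dQ m n f i x * dP m n g i x)
      = (∑ i, dP m n f i x * dQ m n g i x) - ∑ i, dQ m n f i x * dP m n g i x :=
    Finset.sum_sub_distrib _ _
  have e3 : ∑ i, ∑ α, (-(∑ β, Ψ x.2.2 α β * dyA m n A β i x.2.1 x.2.2))
        * (dP m n f i x * dYE m n g α x - dYE m n f α x * dP m n g i x)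
      = (∑ i, ∑ α, (-(∑ β, Ψ x.2.2 α β * dyA m n A β i x.2.1 x.2.2))
          * (dP m n f i x * dYE m n g α x))
        - ∑ i, ∑ α, (-(∑ β, Ψ x.2.2 α β * dyA m n A β i x.2.1 x.2.2))
          * (dYE m n f α x * dP m n g i x) := by
    rw [← Finset.sum_sub_distrib]
    apply Finset.sum_congr rfl; intro i _
    rw [← Finset.sum_sub_distrib]
    apply Finset.sum_congr rfl; intro α _
    ring
  rw [e2, e3]
  ring

end GB

/-- The gauge bracket associated to a Poisson bivector `Ψ` and a gauge
1-form `𝒜` satisfies the Jacobi identity. -/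
theorem gauge_bracket_jacobi (m n : ℕ)
    (Ψ : Vec n → Fin n → Fin n → ℝ)
    (hΨsmooth : ∀ α β, ContDiff ℝ (⊤ : ℕ∞) (fun y => Ψ y α β))
    (hΨskew : ∀ y α β, Ψ y α β = - Ψ y β α)
    (hΨjacobi : ∀ f g h : Vec n → ℝ, ContDiff ℝ (⊤ : ℕ∞) f → ContDiff ℝ (⊤ : ℕ∞) g → ContDiff ℝ (⊤ : ℕ∞) h →
      ∀ y, fibBracket n Ψ f (fibBracket n Ψ g h) y
          + fibBracket n Ψ g (fibBracket n Ψ h f) y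
          + fibBracket n Ψ h (fibBracket n Ψ f g) y = 0)
    (A : Vec m → Vec n → Fin m → ℝ)
    (hAsmooth : ∀ i, ContDiff ℝ (⊤ : ℕ∞) (fun qy : Vec m × Vec n => A qy.1 qy.2 i)) :
    ∀ f g h : ETot m n → ℝ, ContDiff ℝ (⊤ : ℕ∞) f → ContDiff ℝ (⊤ : ℕ∞) g → ContDiff ℝ (⊤ : ℕ∞) h →
      ∀ x : ETot m n,
        gaugeBracket m n Ψ A f (gaugeBracket m n Ψ A g h) x
          + gaugeBracket m n Ψ A g (gaugeBracket m n Ψ A h f) x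
          + gaugeBracket m n Ψ A h (gaugeBracket m n Ψ A f g) x = 0 := by
  intro f g h hf hg hh x
  have hgb : ∀ u v : ETot m n → ℝ, gaugeBracket m n Ψ A u v
      = Br (ebT m n) (fun a b x' => PWb m n Ψ A a b x'.2) u v :=
    fun u v => funext (fun x' => gb_eq m n Ψ A hAsmooth u v x')
  simp only [hgb]
  exact generic_jacobi (ebT m n) (fun a b x' => PWb m n Ψ A a b x'.2)
    (fun a b => (smooth_PWb m n Ψ A hΨsmooth hAsmooth a b).comp
      (ContinuousLinearMap.snd ℝ (Vec m) (Wsp m n)).contDiff)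
    (fun a b y => PWb_skew m n Ψ A hΨskew a b y.2)
    (fun y a c d => hjacE m n Ψ A hΨsmooth hΨskew hΨjacobi hAsmooth y a c d)
    f g h hf hg hh x
end
end

section
/- With the gauge Poisson bivector Π_𝒜 on E = ℝ^m_p × ℝ^m_q × ℝ^n_y determined by a Poisson bivector Ψ on ℝ^n and a gauge 1-form 𝒜, at every point (p,q,y) the rank of Π_𝒜 equals 2m + rank Ψ(y). -/
open scoped BigOperators Topology

noncomputable section

/-- The coefficient matrix of the gauge Poisson bivector `Π_𝒜` at a point `(p,q,y)`,
in the coordinates `(p,q,y)` (indices `Fin m ⊕ Fin m ⊕ Fin n`). -/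
def gaugeMatrix (m n : ℕ) (Ψ : Vec n → Fin n → Fin n → ℝ)
    (A : Vec m → Vec n → Fin m → ℝ) (x : ETot m n) :
    Matrix (Fin m ⊕ Fin m ⊕ Fin n) (Fin m ⊕ Fin m ⊕ Fin n) ℝ :=
  fun a b =>
    match a, b with
    | .inl i, .inl j => curvF m n Ψ A i j x.2.1 x.2.2
    | .inl i, .inr (.inl j) => if i = j then 1 else 0
    | .inl i, .inr (.inr α) => -(∑ β, Ψ x.2.2 α β * dyA m n A β i x.2.1 x.2.2)
    | .inr (.inl i), .inl j => -(if i = j then 1 else 0)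
    | .inr (.inl _), .inr _ => 0
    | .inr (.inr α), .inl j => ∑ β, Ψ x.2.2 α β * dyA m n A β j x.2.1 x.2.2
    | .inr (.inr _), .inr (.inl _) => 0
    | .inr (.inr α), .inr (.inr β) => Ψ x.2.2 α β


open Matrix in
/-- The product of two submodules is linearly equivalent to their (module) product. -/
def subProdEquiv {R M N : Type*} [CommRing R] [AddCommGroup M] [AddCommGroup N]
    [Module R M] [Module R N] (p : Submodule R M) (q : Submodule R N) :
    (p.prod q) ≃ₗ[R] p × q where
  toFun x := (⟨x.1.1, x.2.1⟩, ⟨x.1.2, x.2.2⟩)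
  invFun x := ⟨(x.1.1, x.2.1), ⟨x.1.2, x.2.2⟩⟩
  map_add' := by intros; rfl
  map_smul' := by intros; rfl
  left_inv := by intro x; rfl
  right_inv := by intro x; rfl

lemma range_prodMap' {R M N M' N' : Type*} [CommRing R] [AddCommGroup M] [AddCommGroup N]
    [AddCommGroup M'] [AddCommGroup N'] [Module R M] [Module R N] [Module R M'] [Module R N']
    (f : M →ₗ[R] M') (g : N →ₗ[R] N') :
    LinearMap.range (f.prodMap g) = (LinearMap.range f).prod (LinearMap.range g) := by
  ext ⟨x, y⟩
  simp only [LinearMap.mem_range, Submodule.mem_prod, LinearMap.prodMap_apply, Prod.mk.injEq,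
    Prod.exists]
  constructor
  · rintro ⟨a, b, h1, h2⟩; exact ⟨⟨a, h1⟩, ⟨b, h2⟩⟩
  · rintro ⟨⟨a, h1⟩, ⟨b, h2⟩⟩; exact ⟨a, b, h1, h2⟩

open Matrix in
lemma rank_fromBlocks_diag {p q : Type*} [Fintype p] [Fintype q] [DecidableEq p] [DecidableEq q]
    (A : Matrix p p ℝ) (D : Matrix q q ℝ) :
    (Matrix.fromBlocks A 0 0 D).rank = A.rank + D.rank := by
  set e := LinearEquiv.sumArrowLequivProdArrow p q ℝ ℝ
  have h : (Matrix.fromBlocks A 0 0 D).mulVecLin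
      = e.symm.toLinearMap.comp ((A.mulVecLin.prodMap D.mulVecLin).comp e.toLinearMap) := by
    apply LinearMap.ext
    intro v
    funext i
    rcases i with i | i <;>
      simp [e, Matrix.mulVecLin, Matrix.mulVec, Matrix.fromBlocks, dotProduct,
        Fintype.sum_sum_type, LinearEquiv.sumArrowLequivProdArrow]
  have hcomp : LinearMap.range ((A.mulVecLin.prodMap D.mulVecLin).comp e.toLinearMap)
      = LinearMap.range (A.mulVecLin.prodMap D.mulVecLin) := by
    rw [LinearMap.range_comp_of_range_eq_top]
    exact LinearMap.range_eq_top.mpr e.surjective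
  rw [Matrix.rank, h, LinearMap.range_comp, hcomp, LinearEquiv.finrank_map_eq,
    range_prodMap']
  rw [(subProdEquiv _ _).finrank_eq, Module.finrank_prod]
  rfl

/-- at every point `(p,q,y)`, `rank Π_𝒜 = 2m + rank Ψ(y)`. -/
theorem gauge_bivector_rank (m n : ℕ)
    (Ψ : Vec n → Fin n → Fin n → ℝ)
    (hΨsmooth : ∀ α β, ContDiff ℝ (⊤ : ℕ∞) (fun y => Ψ y α β))
    (hΨskew : ∀ y α β, Ψ y α β = - Ψ y β α)
    (hΨjacobi : ∀ f g h : Vec n → ℝ, ContDiff ℝ (⊤ : ℕ∞) f → ContDiff ℝ (⊤ : ℕ∞) g → ContDiff ℝ (⊤ : ℕ∞) h →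
      ∀ y, fibBracket n Ψ f (fibBracket n Ψ g h) y
          + fibBracket n Ψ g (fibBracket n Ψ h f) y
          + fibBracket n Ψ h (fibBracket n Ψ f g) y = 0)
    (A : Vec m → Vec n → Fin m → ℝ)
    (hAsmooth : ∀ i, ContDiff ℝ (⊤ : ℕ∞) (fun qy : Vec m × Vec n => A qy.1 qy.2 i))
    (x : ETot m n) :
    (gaugeMatrix m n Ψ A x).rank = 2 * m + (Matrix.of (fun α β => Ψ x.2.2 α β)).rank := by
  classical
  set q := x.2.1
  set y := x.2.2
  set F : Matrix (Fin m) (Fin m) ℝ := Matrix.of fun i j => curvF m n Ψ A i j q y with hF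
  set B : Matrix (Fin n) (Fin m) ℝ :=
    Matrix.of fun α i => ∑ β, Ψ y α β * dyA m n A β i q y with hB
  set P : Matrix (Fin n) (Fin n) ℝ := Matrix.of fun α β => Ψ y α β with hP
  have hM : gaugeMatrix m n Ψ A x
      = Matrix.fromBlocks F (Matrix.fromCols 1 (-B.transpose)) (Matrix.fromRows (-1) B)
          (Matrix.fromBlocks 0 0 0 P) := by
    ext a b
    rcases a with i | a <;> [skip; rcases a with i | α] <;>
      (rcases b with j | b <;> [skip; rcases b with j | β]) <;>
      simp [gaugeMatrix, Matrix.fromBlocks, Matrix.fromCols,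
        Matrix.one_apply, F, B, P, q, y]
  set L : Matrix (Fin m ⊕ (Fin m ⊕ Fin n)) (Fin m ⊕ (Fin m ⊕ Fin n)) ℝ :=
    Matrix.fromBlocks 1 0 0 (Matrix.fromBlocks 1 0 B 1) with hL
  set R : Matrix (Fin m ⊕ (Fin m ⊕ Fin n)) (Fin m ⊕ (Fin m ⊕ Fin n)) ℝ :=
    Matrix.fromBlocks 1 0 (Matrix.fromRows (-F) 0) (Matrix.fromBlocks 1 B.transpose 0 1) with hR
  have hdetL : IsUnit L.det := by
    rw [hL, Matrix.det_fromBlocks_zero₁₂, Matrix.det_fromBlocks_zero₁₂]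
    simp
  have hdetR : IsUnit R.det := by
    rw [hR, Matrix.det_fromBlocks_zero₁₂, Matrix.det_fromBlocks_zero₂₁]
    simp
  have hLMR : L * gaugeMatrix m n Ψ A x * R
      = Matrix.fromBlocks 0 (Matrix.fromCols 1 0) (Matrix.fromRows (-1) 0)
          (Matrix.fromBlocks 0 0 0 P) := by
    rw [hM, hL, hR, Matrix.fromBlocks_multiply, Matrix.fromBlocks_multiply]
    congr 1 <;>
      simp [Matrix.fromBlocks_multiply, Matrix.fromBlocks_mul_fromRows,
        Matrix.fromCols_mul_fromRows, Matrix.fromCols_mul_fromBlocks,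
        Matrix.mul_fromCols, Matrix.fromRows_mul, Matrix.fromCols_mul_fromRows]
  have hrank1 : (gaugeMatrix m n Ψ A x).rank = (L * gaugeMatrix m n Ψ A x * R).rank := by
    rw [Matrix.rank_mul_eq_left_of_isUnit_det R (L * gaugeMatrix m n Ψ A x) hdetR,
      Matrix.rank_mul_eq_right_of_isUnit_det L (gaugeMatrix m n Ψ A x) hdetL]
  set K : Matrix (Fin m ⊕ Fin m) (Fin m ⊕ Fin m) ℝ := Matrix.fromBlocks 0 1 (-1) 0 with hK
  set N' : Matrix ((Fin m ⊕ Fin m) ⊕ Fin n) ((Fin m ⊕ Fin m) ⊕ Fin n) ℝ :=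
    Matrix.fromBlocks K 0 0 P with hN'
  have hsub : L * gaugeMatrix m n Ψ A x * R
      = N'.submatrix (Equiv.sumAssoc (Fin m) (Fin m) (Fin n)).symm
          (Equiv.sumAssoc (Fin m) (Fin m) (Fin n)).symm := by
    rw [hLMR]
    ext a b
    rcases a with i | a <;> [skip; rcases a with i | α] <;>
      (rcases b with j | b <;> [skip; rcases b with j | β]) <;>
      simp [hN', hK, Matrix.fromBlocks, Matrix.fromCols, Equiv.sumAssoc,
        Matrix.submatrix]
  have hKK : K * K = -1 := by
    rw [hK, Matrix.fromBlocks_multiply]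
    simp [← Matrix.fromBlocks_one, Matrix.fromBlocks_neg]
  have hKunit : IsUnit K := by
    refine ⟨⟨K, -K, ?_, ?_⟩, rfl⟩
    · rw [mul_neg, hKK, neg_neg]
    · rw [neg_mul, hKK, neg_neg]
  have hrankK : K.rank = 2 * m := by
    rw [Matrix.rank_of_isUnit K hKunit]
    simp [two_mul]
  rw [hrank1, hsub, Matrix.rank_submatrix, hN', rank_fromBlocks_diag, hrankK]
end
end

section
/- Let s : ℝ^m → ℝ³ be smooth with |s(q)| = 1 for all q, and let Fl^t(q,·) be the rotation of ℝ³ by angle t about the axis s(q). With 𝕁(q,y) = ⟨s(q), y⟩, the averaged gauge formula 𝒜_i(q,y) = (1/2π)∫_0^{2π}(t−π)⟨∂s/∂q^i(q), Fl^t(q,y)⟩ dt evaluates to 𝒜_i(q,y) = ⟨s(q) × y, ∂s/∂q^i(q)⟩. -/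
open scoped BigOperators
open Real

noncomputable section

def cross (a b : Vec 3) : Vec 3 :=
  ![a 1 * b 2 - a 2 * b 1, a 2 * b 0 - a 0 * b 2, a 0 * b 1 - a 1 * b 0]

/-- Rotation of `y` by angle `t` about the unit axis `s` (the flow of `y ↦ y × s`). -/
def rot (s : Vec 3) (t : ℝ) (y : Vec 3) : Vec 3 :=
  (∑ α, s α * y α) • s + Real.cos t • (y - (∑ α, s α * y α) • s) + Real.sin t • cross y s

lemma int1 : ∫ t in (0:ℝ)..(2 * π), (t - π) = 0 := by
  have : ∀ t ∈ Set.uIcc (0:ℝ) (2 * π), HasDerivAt (fun t : ℝ => t ^ 2 / 2 - π * t)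
      (t - π) t := by
    intro t _
    have h := ((hasDerivAt_pow 2 t).div_const 2).sub ((hasDerivAt_id t).const_mul π)
    simp only [id_eq] at h
    exact h.congr_deriv (by ring)
  rw [intervalIntegral.integral_eq_sub_of_hasDerivAt this ((by fun_prop : Continuous _).intervalIntegrable _ _)]
  ring

lemma int2 : ∫ t in (0:ℝ)..(2 * π), (t - π) * Real.cos t = 0 := by
  have : ∀ t ∈ Set.uIcc (0:ℝ) (2 * π), HasDerivAt
      (fun t : ℝ => t * Real.sin t + Real.cos t - π * Real.sin t)
      ((t - π) * Real.cos t) t := by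
    intro t _
    have h := (((hasDerivAt_id t).mul (Real.hasDerivAt_sin t)).add
      (Real.hasDerivAt_cos t)).sub ((Real.hasDerivAt_sin t).const_mul π)
    simp only [id_eq] at h
    exact h.congr_deriv (by ring)
  rw [intervalIntegral.integral_eq_sub_of_hasDerivAt this ((by fun_prop : Continuous _).intervalIntegrable _ _)]
  simp [Real.sin_two_pi, Real.cos_two_pi]

lemma int3 : ∫ t in (0:ℝ)..(2 * π), (t - π) * Real.sin t = -(2 * π) := by
  have : ∀ t ∈ Set.uIcc (0:ℝ) (2 * π), HasDerivAt
      (fun t : ℝ => -(t * Real.cos t) + Real.sin t + π * Real.cos t)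
      ((t - π) * Real.sin t) t := by
    intro t _
    have h := ((((hasDerivAt_id t).mul (Real.hasDerivAt_cos t)).neg).add
      (Real.hasDerivAt_sin t)).add ((Real.hasDerivAt_cos t).const_mul π)
    simp only [id_eq] at h
    exact h.congr_deriv (by ring)
  rw [intervalIntegral.integral_eq_sub_of_hasDerivAt this ((by fun_prop : Continuous _).intervalIntegrable _ _)]
  simp [Real.sin_two_pi, Real.cos_two_pi]

/-- for a smooth unit vector field `s : ℝ^m → ℝ³`, the averaged gauge formula
`𝒜_i(q,y) = (1/2π)∫₀^{2π}(t−π)⟨∂s/∂q^i(q), Fl^t(q,y)⟩ dt` (with `Fl^t(q,·)` the rotation by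
angle `t` about `s(q)`) evaluates to `𝒜_i(q,y) = ⟨s(q) × y, ∂s/∂q^i(q)⟩`. -/
theorem averaged_gauge_form_so3 (m : ℕ)
    (s : Vec m → Vec 3) (hs : ContDiff ℝ (⊤ : ℕ∞) s)
    (hunit : ∀ q, ∑ α, (s q α) ^ 2 = 1) :
    ∀ (q : Vec m) (y : Vec 3) (i : Fin m),
      (1 / (2 * π)) * ∫ t in (0:ℝ)..(2 * π),
          (t - π) * ∑ α, fderiv ℝ s q (Pi.single i 1) α * rot (s q) t y α
        = ∑ α, cross (s q) y α * fderiv ℝ s q (Pi.single i 1) α := by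
  intro q y i
  set d : Vec 3 := fderiv ℝ s q (Pi.single i 1) with hd
  set sq : Vec 3 := s q with hsq
  set A : ℝ := ∑ α, d α * ((∑ β, sq β * y β) * sq α) with hA
  set B : ℝ := ∑ α, d α * (y α - (∑ β, sq β * y β) * sq α) with hB
  set C : ℝ := ∑ α, d α * cross y sq α with hC
  have key : ∀ t : ℝ, (t - π) * ∑ α, d α * rot sq t y α
      = (t - π) * A + ((t - π) * Real.cos t) * B + ((t - π) * Real.sin t) * C := by
    intro t
    simp only [hA, hB, hC, rot, Pi.add_apply, Pi.smul_apply, Pi.sub_apply, smul_eq_mul,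
      Fin.sum_univ_three]
    ring
  have hint : (∫ t in (0:ℝ)..(2 * π), (t - π) * ∑ α, d α * rot sq t y α)
      = -(2 * π) * C := by
    rw [intervalIntegral.integral_congr (fun t _ => key t)]
    rw [intervalIntegral.integral_add ((by fun_prop : Continuous _).intervalIntegrable _ _) ((by fun_prop : Continuous _).intervalIntegrable _ _),
      intervalIntegral.integral_add ((by fun_prop : Continuous _).intervalIntegrable _ _) ((by fun_prop : Continuous _).intervalIntegrable _ _),
      intervalIntegral.integral_mul_const, intervalIntegral.integral_mul_const,
      intervalIntegral.integral_mul_const, int1, int2, int3]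
    ring
  rw [hint]
  have hπ : (2 * π) ≠ 0 := by positivity
  have : (1 / (2 * π)) * (-(2 * π) * C) = -C := by field_simp
  rw [this, hC]
  simp only [cross, Fin.sum_univ_three, Matrix.cons_val_zero, Matrix.cons_val_one,
    Matrix.head_cons, Matrix.cons_val_two, Matrix.tail_cons]
  ring
end
end

section
/- Along any solution of the Wu–Yang Wong equations q̇ = ∂ℋ/∂p, ṗ = −∂ℋ/∂q + ((y·q)/|q|⁴) q × ∂ℋ/∂p, ẏ = (1/|q|²)(q × ∂ℋ/∂p) × y on T*(ℝ³∖{0}) × ℝ³, the function 𝕁(q,y) = ⟨q/|q|, y⟩ is a constant of motion: d/dt 𝕁(q(t), y(t)) = 0. -/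
open scoped BigOperators

noncomputable section

def nrm (q : Vec 3) : ℝ := Real.sqrt (∑ i, (q i) ^ 2)

/-- `∂ℋ/∂p` at `(p,q)`. -/
def Hp (H : Vec 3 × Vec 3 → ℝ) (x : Vec 3 × Vec 3) : Vec 3 :=
  fun i => fderiv ℝ H x (Pi.single i 1, 0)

/-- `∂ℋ/∂q` at `(p,q)`. -/
def Hq (H : Vec 3 × Vec 3 → ℝ) (x : Vec 3 × Vec 3) : Vec 3 :=
  fun i => fderiv ℝ H x (0, Pi.single i 1)

/-- along any solution of the Wu–Yang Wong equations on
`T*(ℝ³∖{0}) × ℝ³`, the function `𝕁(q,y) = ⟨q/|q|, y⟩` is a constant of motion. -/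
theorem wu_yang_first_integral
    (H : Vec 3 × Vec 3 → ℝ) (hH : ContDiff ℝ (⊤ : ℕ∞) H)
    (p q y : ℝ → Vec 3)
    (hq0 : ∀ t, q t ≠ 0)
    (hq : ∀ (t : ℝ) (i : Fin 3),
      HasDerivAt (fun s => q s i) (Hp H (p t, q t) i) t)
    (hp : ∀ (t : ℝ) (i : Fin 3),
      HasDerivAt (fun s => p s i)
        (-(Hq H (p t, q t) i)
          + ((∑ α, y t α * q t α) / (nrm (q t)) ^ 4) * cross (q t) (Hp H (p t, q t)) i) t)
    (hy : ∀ (t : ℝ) (α : Fin 3),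
      HasDerivAt (fun s => y s α)
        (((nrm (q t)) ^ 2)⁻¹ * cross (cross (q t) (Hp H (p t, q t))) (y t) α) t) :
    ∀ t : ℝ,
      HasDerivAt (fun s => ∑ α, (q s α / nrm (q s)) * y s α) 0 t := by

  intro t
  set v : Vec 3 := Hp H (p t, q t) with hv
  have hQpos : 0 < ∑ i, (q t i) ^ 2 := by
    obtain ⟨i, hi⟩ := Function.ne_iff.mp (hq0 t)
    refine Finset.sum_pos' (fun j _ => sq_nonneg _) ⟨i, Finset.mem_univ i, ?_⟩
    exact pow_two_pos_of_ne_zero hi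
  have hn_pos : 0 < nrm (q t) := Real.sqrt_pos.mpr hQpos
  have hn : nrm (q t) ≠ 0 := ne_of_gt hn_pos
  have hn2 : nrm (q t) ^ 2 = ∑ i, (q t i) ^ 2 := Real.sq_sqrt hQpos.le
  have hsum : HasDerivAt (fun s => ∑ i, (q s i) ^ 2) (∑ i, 2 * q t i * v i) t := by
    apply HasDerivAt.fun_sum
    intro i _
    have := (hq t i).fun_pow 2
    simpa [mul_comm, mul_assoc, mul_left_comm] using this
  have hnrm : HasDerivAt (fun s => nrm (q s))
      ((∑ i, 2 * q t i * v i) / (2 * nrm (q t))) t := by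
    have := hsum.sqrt (ne_of_gt hQpos)
    simpa [nrm] using this
  have hterm : ∀ α : Fin 3, HasDerivAt (fun s => (q s α / nrm (q s)) * y s α)
      ((v α * nrm (q t) - q t α * ((∑ i, 2 * q t i * v i) / (2 * nrm (q t)))) / (nrm (q t)) ^ 2 * y t α
        + (q t α / nrm (q t)) * (((nrm (q t)) ^ 2)⁻¹ * cross (cross (q t) v) (y t) α)) t := by
    intro α
    exact ((hq t α).div hnrm hn).mul (hy t α)
  have hD := HasDerivAt.fun_sum (fun α (_ : α ∈ Finset.univ) => hterm α)
  convert hD using 1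
  · rfl
  · rfl
  simp only [Fin.sum_univ_three, cross, Matrix.cons_val_zero, Matrix.cons_val_one,
    Matrix.head_cons, Matrix.cons_val_two, Matrix.tail_cons]
  field_simp
  rw [Fin.sum_univ_three] at hn2
  linear_combination
    (-(v 0 * y t 0 + v 1 * y t 1 + v 2 * y t 2)) * hn2
end
end
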